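/- arXiv:1301.0534 — 7 statements merged into one kernel-verified Lean document; each statement's English description precedes it below -/
import Mathlib

section
/- Let η_1 ≥ η_2 ≥ … ≥ η_T > 0 be a nonincreasing sequence of learning rates and ℓ_1,…,ℓ_T ∈ ℝ^K loss vectors. For each t and rate η let M_t^{(η)} = -(1/η)·ln((1/K)·∑_k e^{-η L_{t,k}}) where L_t = ∑_{s≤t} ℓ_s. Then the cumulative mix loss of the variable-rate strategy, ∑_{t=1}^T (M_t^{(η_t)} - M_{t-1}^{(η_t)}), is at most M_T^{(η_T)}, the cumulative mix loss of the constant strategy using the final learning rate throughout. -/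
open Finset

noncomputable section

/-- Cumulative losses: `L t k = ∑_{s < t} ℓ s k` (so `L 0 = 0`). -/
def cumLoss {K : ℕ} (ℓ : ℕ → Fin K → ℝ) (t : ℕ) (k : Fin K) : ℝ :=
  ∑ s ∈ Finset.range t, ℓ s k

/-- `M t η = -(1/η)·ln((1/K)·∑ₖ e^{-η L_{t,k}})`, the cumulative mix loss of constant-rate
Hedge with uniform prior after `t` rounds; `M 0 η = 0`. -/
def Mconst {K : ℕ} (ℓ : ℕ → Fin K → ℝ) (η : ℝ) (t : ℕ) : ℝ :=
  -(1/η) * Real.log ((1 / (K : ℝ)) * ∑ k, Real.exp (-η * cumLoss ℓ t k))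

lemma Mconst_zero {K : ℕ} (hK : 1 ≤ K) (ℓ : ℕ → Fin K → ℝ) (η : ℝ) :
    Mconst ℓ η 0 = 0 := by
  have hKpos : (0:ℝ) < K := by exact_mod_cast hK
  simp [Mconst, cumLoss, Real.exp_zero, Finset.card_univ,
    one_div, inv_mul_cancel₀ hKpos.ne']

lemma Spos {K : ℕ} (hK : 1 ≤ K) (ℓ : ℕ → Fin K → ℝ) (η : ℝ) (t : ℕ) :
    0 < (1 / (K : ℝ)) * ∑ k, Real.exp (-η * cumLoss ℓ t k) := by
  have hKpos : (0:ℝ) < K := by exact_mod_cast hK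
  have : (Finset.univ : Finset (Fin K)).Nonempty := by
    simpa [Finset.univ_nonempty_iff] using Fin.pos_iff_nonempty.mp hK
  exact mul_pos (by positivity) (Finset.sum_pos (fun k _ => Real.exp_pos _) this)

/-- Monotonicity of mix loss in the learning rate. -/
lemma Mconst_anti {K : ℕ} (hK : 1 ≤ K) (ℓ : ℕ → Fin K → ℝ) (t : ℕ)
    {a b : ℝ} (ha : 0 < a) (hab : a ≤ b) :
    Mconst ℓ b t ≤ Mconst ℓ a t := by
  have hb : 0 < b := lt_of_lt_of_le ha hab
  have hKpos : (0:ℝ) < K := by exact_mod_cast hK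
  set Sa := (1 / (K : ℝ)) * ∑ k, Real.exp (-a * cumLoss ℓ t k) with hSa
  set Sb := (1 / (K : ℝ)) * ∑ k, Real.exp (-b * cumLoss ℓ t k) with hSb
  have hSapos : 0 < Sa := Spos hK ℓ a t
  have hSbpos : 0 < Sb := Spos hK ℓ b t
  have hp : 1 ≤ b / a := (one_le_div ha).mpr hab
  -- Jensen: Sa ^ (b/a) ≤ Sb
  have key : Sa ^ (b / a) ≤ Sb := by
    have := Real.rpow_arith_mean_le_arith_mean_rpow Finset.univ
      (fun _ : Fin K => 1 / (K : ℝ)) (fun k => Real.exp (-a * cumLoss ℓ t k))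
      (fun _ _ => by positivity)
      (by simp [Finset.card_univ]; field_simp)
      (fun k _ => (Real.exp_pos _).le) hp
    calc Sa ^ (b / a) = (∑ k, (1 / (K:ℝ)) * Real.exp (-a * cumLoss ℓ t k)) ^ (b / a) := by
          rw [hSa, Finset.mul_sum]
      _ ≤ ∑ k, (1 / (K:ℝ)) * Real.exp (-a * cumLoss ℓ t k) ^ (b / a) := this
      _ = Sb := by
          rw [hSb, Finset.mul_sum]
          refine Finset.sum_congr rfl fun k _ => ?_
          rw [← Real.exp_mul]
          congr 1
          field_simp
  have hlog : (b / a) * Real.log Sa ≤ Real.log Sb := by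
    have := Real.log_le_log (Real.rpow_pos_of_pos hSapos _) key
    rwa [Real.log_rpow hSapos] at this
  -- conclude
  have : -(1/b) * Real.log Sb ≤ -(1/a) * Real.log Sa := by
    have h1 : -(1/b) * Real.log Sb ≤ -(1/b) * ((b / a) * Real.log Sa) := by
      have hbinv : (0:ℝ) ≤ 1/b := by positivity
      nlinarith [hlog]
    have h2 : -(1/b) * ((b / a) * Real.log Sa) = -(1/a) * Real.log Sa := by
      field_simp
    linarith [h1, h2 ▸ h1]
  simpa [Mconst, hSa, hSb] using this

/-- If `η 0 ≥ η 1 ≥ … > 0` is nonincreasing (rounds indexed `0,…,T-1`, round `t` using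
rate `η t`), then the cumulative mix loss `∑_t (M_{t+1}^{(η t)} - M_t^{(η t)})` of the
variable-rate strategy is at most `M_T^{(η (T-1))}`, the cumulative mix loss of the
constant strategy with the final learning rate. -/
theorem mix_loss_decreasing_rates_le_final_rate (K : ℕ) (hK : 1 ≤ K)
    (ℓ : ℕ → Fin K → ℝ) (T : ℕ) (hT : 1 ≤ T) (η : ℕ → ℝ)
    (hpos : ∀ t, t < T → 0 < η t)
    (hmono : ∀ s t, s ≤ t → t < T → η t ≤ η s) :
    ∑ t ∈ Finset.range T, (Mconst ℓ (η t) (t+1) - Mconst ℓ (η t) t) ≤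
      Mconst ℓ (η (T-1)) T := by
  induction T, hT using Nat.le_induction with
  | base =>
    simp [Mconst_zero hK ℓ (η 0)]
  | succ T hT ih =>
    have hstep : ∀ s t, s ≤ t → t < T → η t ≤ η s := fun s t hst htT =>
      hmono s t hst (htT.trans (Nat.lt_succ_self T))
    have hposT : ∀ t, t < T → 0 < η t := fun t htT =>
      hpos t (htT.trans (Nat.lt_succ_self T))
    have ih' := ih hposT hstep
    rw [Finset.sum_range_succ]
    have hMT : Mconst ℓ (η (T-1)) T ≤ Mconst ℓ (η T) T := by
      have haT : 0 < η T := hpos T (Nat.lt_succ_self T)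
      have : η T ≤ η (T-1) := hmono (T-1) T (Nat.sub_le T 1) (Nat.lt_succ_self T)
      exact Mconst_anti hK ℓ T haT this
    have : (T + 1) - 1 = T := rfl
    rw [this]
    linarith
end
end

section
/- AdaHedge's regret satisfies R_T ≤ 2·Δ_T, where Δ_T is AdaHedge's cumulative mixability gap. Precisely: with losses in [0,1]^K, AdaHedge uses learning rate η_t = (ln K)/Δ_{t-1} (with η_1 = ∞), weights w_{t,k} ∝ e^{-η_t L_{t-1,k}}, Hedge loss h_t = w_t·ℓ_t, mix loss m_t = -(1/η_t)·ln(∑_k w_{t,k} e^{-η_t ℓ_{t,k}}), δ_t = h_t - m_t ≥ 0, Δ_t = ∑_{s≤t} δ_s. Then H_T - L*_T = (M_T - L*_T) + Δ_T ≤ 2Δ_T. -/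
open Finset

noncomputable section

/-- `L* = min_k L k`. -/
def bestLoss {K : ℕ} [NeZero K] (L : Fin K → ℝ) : ℝ :=
  Finset.univ.inf' ⟨⟨0, Nat.pos_of_ne_zero (NeZero.ne K)⟩, Finset.mem_univ _⟩ L

/-- The set of current leaders. -/
def leaders {K : ℕ} [NeZero K] (L : Fin K → ℝ) : Finset (Fin K) :=
  Finset.univ.filter fun k => L k = bestLoss L

/-- Hedge weights at round `t` (rounds indexed `0,…,T-1`), given the cumulative mixability
gap `D = Δ_{t-1}` accrued so far, i.e. with learning rate `η_t = ln K / D`; the case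
`D = 0` corresponds to `η_t = ∞`, giving uniform weights on the current leaders (FTL). -/
def wts {K : ℕ} [NeZero K] (ℓ : ℕ → Fin K → ℝ) (t : ℕ) (D : ℝ) (k : Fin K) : ℝ :=
  if D = 0 then
    (if k ∈ leaders (cumLoss ℓ t) then ((leaders (cumLoss ℓ t)).card : ℝ)⁻¹ else 0)
  else
    Real.exp (-(Real.log K / D) * cumLoss ℓ t k) /
      ∑ j, Real.exp (-(Real.log K / D) * cumLoss ℓ t j)

/-- Hedge loss `h_t = w_t · ℓ_t`. -/
def hloss {K : ℕ} [NeZero K] (ℓ : ℕ → Fin K → ℝ) (t : ℕ) (D : ℝ) : ℝ :=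
  ∑ k, wts ℓ t D k * ℓ t k

/-- Per-round mix loss `m_t = -(1/η_t)·ln(∑ₖ w_{t,k} e^{-η_t ℓ_{t,k}})` at rate
`η_t = ln K / D`, written in telescoped form; for `D = 0` (i.e. `η_t = ∞`) it equals
`L*_t - L*_{t-1}`. -/
def mloss {K : ℕ} [NeZero K] (ℓ : ℕ → Fin K → ℝ) (t : ℕ) (D : ℝ) : ℝ :=
  if D = 0 then bestLoss (cumLoss ℓ (t+1)) - bestLoss (cumLoss ℓ t)
  else Mconst ℓ (Real.log K / D) (t+1) - Mconst ℓ (Real.log K / D) t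

/-- Mixability gap `δ_t = h_t - m_t`. -/
def mixGap {K : ℕ} [NeZero K] (ℓ : ℕ → Fin K → ℝ) (t : ℕ) (D : ℝ) : ℝ :=
  hloss ℓ t D - mloss ℓ t D

/-- AdaHedge's cumulative mixability gap `Δ_t`, defined recursively: `Δ_0 = 0` and
`Δ_{t+1} = Δ_t + δ_{t+1}`, where round `t+1` uses learning rate `η = ln K / Δ_t`
(interpreted as `∞` when `Δ_t = 0`). -/
def ahDelta {K : ℕ} [NeZero K] (ℓ : ℕ → Fin K → ℝ) : ℕ → ℝ
  | 0 => 0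
  | (t+1) => ahDelta ℓ t + mixGap ℓ t (ahDelta ℓ t)

/-- Loss variance `v_t = ∑ₖ w_{t,k}(ℓ_{t,k} - h_t)²`. -/
def vvar {K : ℕ} [NeZero K] (ℓ : ℕ → Fin K → ℝ) (t : ℕ) (D : ℝ) : ℝ :=
  ∑ k, wts ℓ t D k * (ℓ t k - hloss ℓ t D)^2

namespace AdaHedgeAux

variable {K : ℕ} [NeZero K]

lemma Kpos : 0 < (K : ℝ) := by
  exact_mod_cast Nat.pos_of_ne_zero (NeZero.ne K)

lemma univ_nonempty' : (Finset.univ : Finset (Fin K)).Nonempty :=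
  ⟨⟨0, Nat.pos_of_ne_zero (NeZero.ne K)⟩, Finset.mem_univ _⟩

lemma bestLoss_le (L : Fin K → ℝ) (k : Fin K) : bestLoss L ≤ L k :=
  Finset.inf'_le _ (Finset.mem_univ k)

lemma exists_best (L : Fin K → ℝ) : ∃ k, bestLoss L = L k := by
  obtain ⟨k, -, hk⟩ := Finset.exists_mem_eq_inf' (univ_nonempty' (K := K)) L
  exact ⟨k, hk⟩

lemma mem_leaders {L : Fin K → ℝ} {k : Fin K} : k ∈ leaders L ↔ L k = bestLoss L := by
  simp [leaders]

lemma leaders_nonempty (L : Fin K → ℝ) : (leaders L).Nonempty := by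
  obtain ⟨k, hk⟩ := exists_best L
  exact ⟨k, mem_leaders.2 hk.symm⟩

lemma cumLoss_succ (ℓ : ℕ → Fin K → ℝ) (t : ℕ) (k : Fin K) :
    cumLoss ℓ (t+1) k = cumLoss ℓ t k + ℓ t k :=
  Finset.sum_range_succ _ _

lemma cumLoss_zero (ℓ : ℕ → Fin K → ℝ) (k : Fin K) : cumLoss ℓ 0 k = 0 := by
  simp [cumLoss]

lemma bestLoss_cum0 (ℓ : ℕ → Fin K → ℝ) : bestLoss (cumLoss ℓ 0) = 0 := by
  have : cumLoss ℓ 0 = fun _ => (0:ℝ) := by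
    funext k; exact cumLoss_zero ℓ k
  rw [bestLoss, this]
  exact Finset.inf'_const _ _

lemma sumexp_pos (ℓ : ℕ → Fin K → ℝ) (η : ℝ) (t : ℕ) :
    0 < ∑ j : Fin K, Real.exp (-η * cumLoss ℓ t j) :=
  Finset.sum_pos (fun j _ => Real.exp_pos _) univ_nonempty'

/-- `δ_t ≥ 0` for the FTL round (`η = ∞`). -/
lemma mloss_zero_le_hloss (ℓ : ℕ → Fin K → ℝ) (t : ℕ) : mloss ℓ t 0 ≤ hloss ℓ t 0 := by
  set s := leaders (cumLoss ℓ t) with hs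
  have hld : s.Nonempty := leaders_nonempty _
  have hcard : 0 < (s.card : ℝ) := by exact_mod_cast Finset.card_pos.2 hld
  set c : ℝ := (s.card : ℝ)⁻¹ with hc
  have hcn : 0 ≤ c := by positivity
  have hh : hloss ℓ t 0 = ∑ k ∈ s, c * ℓ t k := by
    rw [hloss]
    have hterm0 : ∀ k ∈ Finset.univ, wts ℓ t 0 k * ℓ t k
        = if k ∈ s then c * ℓ t k else 0 := by
      intro k _
      simp only [wts, if_pos rfl, ← hs, ← hc]
      by_cases h : k ∈ s <;> simp [h]
    rw [Finset.sum_congr rfl hterm0, Finset.sum_ite_mem, Finset.univ_inter]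
  set B := bestLoss (cumLoss ℓ t) with hB
  set B' := bestLoss (cumLoss ℓ (t+1)) with hB'
  have hml : mloss ℓ t 0 = B' - B := by rw [mloss, if_pos rfl]
  have hterm : ∀ k ∈ s, B' - B ≤ ℓ t k := by
    intro k hk
    have h1 : B' ≤ cumLoss ℓ (t+1) k := bestLoss_le _ _
    have h2 : cumLoss ℓ t k = B := mem_leaders.1 hk
    rw [cumLoss_succ, h2] at h1
    linarith
  have hcsum : ∑ _k ∈ s, c * (B' - B) = B' - B := by
    rw [Finset.sum_const, nsmul_eq_mul, hc]
    field_simp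
  calc mloss ℓ t 0 = ∑ _k ∈ s, c * (B' - B) := by rw [hml, hcsum]
    _ ≤ ∑ k ∈ s, c * ℓ t k :=
        Finset.sum_le_sum fun k hk => mul_le_mul_of_nonneg_left (hterm k hk) hcn
    _ = hloss ℓ t 0 := hh.symm

/-- `δ_t ≥ 0` for finite positive learning rate. -/
lemma mloss_le_hloss_pos (ℓ : ℕ → Fin K → ℝ) (t : ℕ) {D : ℝ}
    (hK : 0 < Real.log K) (hD : 0 < D) : mloss ℓ t D ≤ hloss ℓ t D := by
  have hDne : D ≠ 0 := ne_of_gt hD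
  set η := Real.log K / D with hη
  have hηpos : 0 < η := div_pos hK hD
  set S0 := ∑ j : Fin K, Real.exp (-η * cumLoss ℓ t j) with hS0
  set S1 := ∑ j : Fin K, Real.exp (-η * cumLoss ℓ (t+1) j) with hS1
  have hS0pos : 0 < S0 := sumexp_pos ℓ η t
  have hS1pos : 0 < S1 := sumexp_pos ℓ η (t+1)
  set w := fun k : Fin K => Real.exp (-η * cumLoss ℓ t k) / S0 with hw
  have hw0 : ∀ k ∈ Finset.univ, (0:ℝ) ≤ w k := fun k _ =>
    div_nonneg (Real.exp_pos _).le hS0pos.le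
  have hw1 : ∑ k, w k = 1 := by
    rw [hw, ← Finset.sum_div, ← hS0, div_self hS0pos.ne']
  have hh : hloss ℓ t D = ∑ k, w k * ℓ t k := by
    rw [hloss]
    refine Finset.sum_congr rfl fun k _ => ?_
    rw [wts, if_neg hDne, hw, ← hη, ← hS0]
  have hj := convexOn_exp.map_sum_le (t := Finset.univ) (p := fun k => -η * ℓ t k)
      hw0 hw1 (fun k _ => Set.mem_univ _)
  simp only [smul_eq_mul] at hj
  have harg : ∑ k, w k * (-η * ℓ t k) = -η * hloss ℓ t D := by
    rw [hh, Finset.mul_sum]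
    exact Finset.sum_congr rfl fun k _ => by ring
  have hsum : ∑ k, w k * Real.exp (-η * ℓ t k) = S1 / S0 := by
    rw [hS1, Finset.sum_div]
    refine Finset.sum_congr rfl fun k _ => ?_
    rw [hw, cumLoss_succ, div_mul_eq_mul_div, ← Real.exp_add]
    ring_nf
  rw [harg, hsum] at hj
  have hlog : -η * hloss ℓ t D ≤ Real.log S1 - Real.log S0 := by
    rw [← Real.log_div hS1pos.ne' hS0pos.ne']
    exact (Real.le_log_iff_exp_le (by positivity)).2 hj
  have hKne : (1 / (K:ℝ)) ≠ 0 := by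
    have := Kpos (K := K); positivity
  have hml : mloss ℓ t D = -(1/η) * (Real.log S1 - Real.log S0) := by
    rw [mloss, if_neg hDne, Mconst, Mconst, ← hη, ← hS0, ← hS1,
      Real.log_mul hKne hS1pos.ne', Real.log_mul hKne hS0pos.ne']
    ring
  have h2 := mul_le_mul_of_nonneg_left hlog (le_of_lt (one_div_pos.2 hηpos))
  have h3 : (1/η) * (-η * hloss ℓ t D) = -hloss ℓ t D := by
    field_simp
  rw [h3] at h2
  rw [hml]
  linarith

/-- `L* ≤ Mconst η` for `η > 0`. -/
lemma bestLoss_le_Mconst (ℓ : ℕ → Fin K → ℝ) (t : ℕ) {η : ℝ} (hη : 0 < η) :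
    bestLoss (cumLoss ℓ t) ≤ Mconst ℓ η t := by
  set B := bestLoss (cumLoss ℓ t) with hB
  set S := ∑ k : Fin K, Real.exp (-η * cumLoss ℓ t k) with hS
  have hSpos : 0 < S := sumexp_pos ℓ η t
  have hKp : 0 < (K:ℝ) := Kpos
  have hsum_le : S ≤ (K:ℝ) * Real.exp (-η * B) := by
    calc S ≤ ∑ _k : Fin K, Real.exp (-η * B) := by
            refine Finset.sum_le_sum fun k _ => Real.exp_le_exp.2 ?_
            have := bestLoss_le (cumLoss ℓ t) k
            nlinarith
      _ = (K:ℝ) * Real.exp (-η * B) := by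
            rw [Finset.sum_const, nsmul_eq_mul, Finset.card_univ, Fintype.card_fin]
  have hle : (1/(K:ℝ)) * S ≤ Real.exp (-η * B) := by
    have := mul_le_mul_of_nonneg_left hsum_le (le_of_lt (one_div_pos.2 hKp))
    calc (1/(K:ℝ)) * S ≤ (1/(K:ℝ)) * ((K:ℝ) * Real.exp (-η * B)) := this
      _ = Real.exp (-η * B) := by field_simp
  have hpos : 0 < (1/(K:ℝ)) * S := by positivity
  have hlog : Real.log ((1/(K:ℝ)) * S) ≤ -η * B := by
    calc Real.log ((1/(K:ℝ)) * S) ≤ Real.log (Real.exp (-η * B)) :=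
          Real.log_le_log hpos hle
      _ = -η * B := Real.log_exp _
  rw [Mconst, ← hS]
  have h2 := mul_le_mul_of_nonneg_left hlog (le_of_lt (one_div_pos.2 hη))
  have h3 : (1/η) * (-η * B) = -B := by field_simp
  rw [h3] at h2
  linarith

/-- `Mconst η ≤ L* + ln K / η` for `η > 0`. -/
lemma Mconst_le (ℓ : ℕ → Fin K → ℝ) (t : ℕ) {η : ℝ} (hη : 0 < η) :
    Mconst ℓ η t ≤ bestLoss (cumLoss ℓ t) + Real.log K / η := by
  set B := bestLoss (cumLoss ℓ t) with hB
  set S := ∑ k : Fin K, Real.exp (-η * cumLoss ℓ t k) with hS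
  have hSpos : 0 < S := sumexp_pos ℓ η t
  have hKp : 0 < (K:ℝ) := Kpos
  obtain ⟨k0, hk0⟩ := exists_best (cumLoss ℓ t)
  have hge : Real.exp (-η * B) ≤ S := by
    rw [hB, hk0]
    exact Finset.single_le_sum (f := fun k : Fin K => Real.exp (-η * cumLoss ℓ t k))
      (fun k _ => (Real.exp_pos _).le) (Finset.mem_univ k0)
  have hle : (1/(K:ℝ)) * Real.exp (-η * B) ≤ (1/(K:ℝ)) * S :=
    mul_le_mul_of_nonneg_left hge (le_of_lt (one_div_pos.2 hKp))
  have hpos : 0 < (1/(K:ℝ)) * S := by positivity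
  have hlog : Real.log (1/(K:ℝ)) + (-η * B) ≤ Real.log ((1/(K:ℝ)) * S) := by
    have h1 : Real.log ((1/(K:ℝ)) * Real.exp (-η * B)) ≤ Real.log ((1/(K:ℝ)) * S) :=
      Real.log_le_log (by positivity) hle
    rwa [Real.log_mul (by positivity) (Real.exp_pos _).ne', Real.log_exp] at h1
  have hlogK : Real.log (1/(K:ℝ)) = -Real.log K := by
    rw [one_div, Real.log_inv]
  rw [Mconst, ← hS]
  have h2 := mul_le_mul_of_nonneg_left hlog (le_of_lt (one_div_pos.2 hη))
  have h3 : (1/η) * (Real.log (1/(K:ℝ)) + (-η * B)) = -(Real.log K)/η - B := by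
    rw [hlogK]; field_simp; ring
  rw [h3] at h2
  ring_nf at h2 ⊢
  linarith

/-- `Mconst` is antitone in the learning rate. -/
lemma Mconst_anti (ℓ : ℕ → Fin K → ℝ) (t : ℕ) {η' η : ℝ} (h0 : 0 < η') (h : η' ≤ η) :
    Mconst ℓ η t ≤ Mconst ℓ η' t := by
  have hηpos : 0 < η := lt_of_lt_of_le h0 h
  set p := η / η' with hp
  have hp1 : 1 ≤ p := (one_le_div h0).2 h
  have hKp : 0 < (K:ℝ) := Kpos
  set z := fun k : Fin K => Real.exp (-η' * cumLoss ℓ t k) with hz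
  have hw1 : ∑ _k : Fin K, (1/(K:ℝ)) = 1 := by
    rw [Finset.sum_const, nsmul_eq_mul, Finset.card_univ, Fintype.card_fin]
    field_simp
  have hjen := (convexOn_rpow hp1).map_sum_le (t := Finset.univ)
    (w := fun _ : Fin K => (1/(K:ℝ))) (p := z)
    (fun k _ => by positivity) hw1 (fun k _ => Set.mem_Ici.2 (Real.exp_pos _).le)
  simp only [smul_eq_mul] at hjen
  set A := ∑ k : Fin K, (1/(K:ℝ)) * z k with hA
  have hApos : 0 < A :=
    Finset.sum_pos (fun k _ => by positivity) univ_nonempty'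
  have hzp : ∀ k : Fin K, z k ^ p = Real.exp (-η * cumLoss ℓ t k) := by
    intro k
    rw [hz, ← Real.exp_log (x := Real.exp (-η' * cumLoss ℓ t k) ^ p)
      (Real.rpow_pos_of_pos (Real.exp_pos _) _), Real.log_rpow (Real.exp_pos _),
      Real.log_exp]
    congr 1
    rw [hp]; field_simp
  set Bv := ∑ k : Fin K, (1/(K:ℝ)) * Real.exp (-η * cumLoss ℓ t k) with hBv
  have hBpos : 0 < Bv :=
    Finset.sum_pos (fun k _ => by positivity) univ_nonempty'
  have hjen2 : A ^ p ≤ Bv := by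
    calc A ^ p ≤ ∑ k : Fin K, (1/(K:ℝ)) * z k ^ p := hjen
      _ = Bv := Finset.sum_congr rfl fun k _ => by rw [hzp]
  have hlog : p * Real.log A ≤ Real.log Bv := by
    rw [← Real.log_rpow hApos]
    exact Real.log_le_log (Real.rpow_pos_of_pos hApos _) hjen2
  have hMA : Mconst ℓ η' t = -(1/η') * Real.log A := by
    rw [Mconst, hA, Finset.mul_sum]
  have hMB : Mconst ℓ η t = -(1/η) * Real.log Bv := by
    rw [Mconst, hBv, Finset.mul_sum]
  rw [hMA, hMB]
  have h2 := mul_le_mul_of_nonneg_left hlog (le_of_lt (one_div_pos.2 hηpos))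
  have h3 : (1/η) * (p * Real.log A) = (1/η') * Real.log A := by
    rw [hp]; field_simp
  nlinarith [h2, h3]

/-- The potential `Ψ(D,t)`: mix loss at rate `ln K / D` (best loss when `D = 0`). -/
def Psi (ℓ : ℕ → Fin K → ℝ) (D : ℝ) (t : ℕ) : ℝ :=
  if D = 0 then bestLoss (cumLoss ℓ t) else Mconst ℓ (Real.log K / D) t

lemma mloss_eq_Psi (ℓ : ℕ → Fin K → ℝ) (t : ℕ) (D : ℝ) :
    mloss ℓ t D = Psi ℓ D (t+1) - Psi ℓ D t := by
  by_cases h : D = 0 <;> simp [mloss, Psi, h]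

lemma Psi_zero (ℓ : ℕ → Fin K → ℝ) (D : ℝ) : Psi ℓ D 0 = 0 := by
  have hKne : ((K:ℝ)) ≠ 0 := (Kpos (K := K)).ne'
  by_cases h : D = 0
  · rw [Psi, if_pos h, bestLoss_cum0]
  · rw [Psi, if_neg h, Mconst]
    have : ∀ k : Fin K, Real.exp (-(Real.log K / D) * cumLoss ℓ 0 k) = 1 := by
      intro k; rw [cumLoss_zero]; simp
    rw [Finset.sum_congr rfl fun k _ => this k]
    rw [Finset.sum_const, nsmul_eq_mul, Finset.card_univ, Fintype.card_fin, mul_one]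
    rw [one_div_mul_cancel hKne, Real.log_one, mul_zero]

lemma Psi_mono (ℓ : ℕ → Fin K → ℝ) (hK : 0 < Real.log K) {D1 D2 : ℝ}
    (h0 : 0 ≤ D1) (h12 : D1 ≤ D2) (t : ℕ) : Psi ℓ D1 t ≤ Psi ℓ D2 t := by
  rcases eq_or_lt_of_le h12 with rfl | hlt
  · exact le_refl _
  have hD2 : 0 < D2 := lt_of_le_of_lt h0 hlt
  by_cases h1 : D1 = 0
  · rw [Psi, if_pos h1, Psi, if_neg hD2.ne']
    exact bestLoss_le_Mconst ℓ t (div_pos hK hD2)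
  · have hD1 : 0 < D1 := lt_of_le_of_ne h0 (Ne.symm h1)
    rw [Psi, if_neg h1, Psi, if_neg hD2.ne']
    exact Mconst_anti ℓ t (div_pos hK hD2)
      (div_le_div_of_nonneg_left hK.le hD1 hlt.le)

lemma mixGap_nonneg (ℓ : ℕ → Fin K → ℝ) (hK : 0 < Real.log K) (t : ℕ) {D : ℝ}
    (hD : 0 ≤ D) : 0 ≤ mixGap ℓ t D := by
  rcases eq_or_lt_of_le hD with rfl | h
  · exact sub_nonneg.2 (mloss_zero_le_hloss ℓ t)
  · exact sub_nonneg.2 (mloss_le_hloss_pos ℓ t hK h)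

lemma key (ℓ : ℕ → Fin K → ℝ) (hK : 0 < Real.log K) :
    ∀ T : ℕ, 0 ≤ ahDelta ℓ T ∧
      (∑ t ∈ Finset.range T, mloss ℓ t (ahDelta ℓ t)) ≤ Psi ℓ (ahDelta ℓ T) T
  | 0 => ⟨le_refl _, by simp [ahDelta, Psi_zero]⟩
  | (T+1) => by
    obtain ⟨h0, hM⟩ := key ℓ hK T
    have hgap := mixGap_nonneg ℓ hK T h0
    have hDsucc : ahDelta ℓ (T+1) = ahDelta ℓ T + mixGap ℓ T (ahDelta ℓ T) := rfl
    constructor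
    · rw [hDsucc]; linarith
    · rw [Finset.sum_range_succ, mloss_eq_Psi]
      have h1 : Psi ℓ (ahDelta ℓ T) (T+1) ≤ Psi ℓ (ahDelta ℓ (T+1)) (T+1) :=
        Psi_mono ℓ hK h0 (by rw [hDsucc]; linarith) _
      linarith

lemma ahDelta_eq_sum (ℓ : ℕ → Fin K → ℝ) :
    ∀ T : ℕ, ahDelta ℓ T
      = ∑ t ∈ Finset.range T, (hloss ℓ t (ahDelta ℓ t) - mloss ℓ t (ahDelta ℓ t))
  | 0 => by simp [ahDelta]
  | (T+1) => by
    rw [Finset.sum_range_succ, ← ahDelta_eq_sum ℓ T]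
    rfl

end AdaHedgeAux

open AdaHedgeAux in
/-- AdaHedge regret bound: for losses in `[0,1]^K`,
`R_T = H_T - L*_T = (M_T - L*_T) + Δ_T ≤ 2·Δ_T`. -/
theorem adahedge_regret_le_two_delta (K : ℕ) [NeZero K] (T : ℕ)
    (ℓ : ℕ → Fin K → ℝ) (hℓ : ∀ t k, ℓ t k ∈ Set.Icc (0 : ℝ) 1) :
    (∑ t ∈ Finset.range T, hloss ℓ t (ahDelta ℓ t)) - bestLoss (cumLoss ℓ T) =
      ((∑ t ∈ Finset.range T, mloss ℓ t (ahDelta ℓ t)) - bestLoss (cumLoss ℓ T))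
        + (ahDelta ℓ T) ∧
    (∑ t ∈ Finset.range T, hloss ℓ t (ahDelta ℓ t)) - bestLoss (cumLoss ℓ T) ≤
      2 * ahDelta ℓ T := by
  have hsum : ahDelta ℓ T = (∑ t ∈ Finset.range T, hloss ℓ t (ahDelta ℓ t))
      - (∑ t ∈ Finset.range T, mloss ℓ t (ahDelta ℓ t)) := by
    rw [ahDelta_eq_sum, Finset.sum_sub_distrib]
  refine ⟨by linarith, ?_⟩
  rcases lt_or_ge 1 K with hK2 | hK1
  · have hK : 0 < Real.log K := Real.log_pos (by exact_mod_cast hK2)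
    obtain ⟨hD0, hM⟩ := key ℓ hK T
    have hPsi : Psi ℓ (ahDelta ℓ T) T ≤ bestLoss (cumLoss ℓ T) + ahDelta ℓ T := by
      by_cases h : ahDelta ℓ T = 0
      · rw [Psi, if_pos h, h, add_zero]
      · have hpos : 0 < ahDelta ℓ T := lt_of_le_of_ne hD0 (Ne.symm h)
        rw [Psi, if_neg h]
        have hMle := Mconst_le ℓ T (div_pos hK hpos)
        have heq : Real.log K / (Real.log K / ahDelta ℓ T) = ahDelta ℓ T := by
          rw [div_div_eq_mul_div, mul_comm, mul_div_assoc, div_self hK.ne', mul_one]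
        rw [heq] at hMle
        exact hMle
    linarith
  · have hK1' : K = 1 := le_antisymm hK1 (Nat.pos_of_ne_zero (NeZero.ne K))
    subst hK1'
    have hb : ∀ u, bestLoss (cumLoss ℓ u) = cumLoss ℓ u 0 := by
      intro u
      obtain ⟨k, hk⟩ := exists_best (cumLoss ℓ u)
      rw [hk, Subsingleton.elim k 0]
    have hml : ∀ t, mloss ℓ t 0 = ℓ t 0 := by
      intro t
      rw [mloss, if_pos rfl, hb, hb, cumLoss_succ]
      ring
    have hhl : ∀ t, hloss ℓ t 0 = ℓ t 0 := by
      intro t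
      have hld : leaders (cumLoss ℓ t) = Finset.univ := by
        ext k
        simp only [Finset.mem_univ, iff_true]
        rw [mem_leaders, Subsingleton.elim k 0, hb]
      rw [hloss, Fin.sum_univ_one, wts, if_pos rfl, hld]
      simp
    have hdelta : ∀ t, ahDelta ℓ t = 0 := by
      intro t
      induction t with
      | zero => rfl
      | succ n ih =>
        show ahDelta ℓ n + mixGap ℓ n (ahDelta ℓ n) = 0
        rw [ih, mixGap, hml, hhl]
        ring
    have hH : ∑ t ∈ Finset.range T, hloss ℓ t (ahDelta ℓ t) = bestLoss (cumLoss ℓ T) := by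
      rw [hb]
      calc ∑ t ∈ Finset.range T, hloss ℓ t (ahDelta ℓ t)
          = ∑ t ∈ Finset.range T, ℓ t 0 := by
            refine Finset.sum_congr rfl fun t _ => ?_
            rw [hdelta t, hhl t]
        _ = cumLoss ℓ T 0 := rfl
    rw [hH, hdelta T]
    simp

end
end

section
/- (Bernstein's bound for the mixability gap) Let ℓ ∈ [0,1]^K, w a probability vector, η ∈ (0,∞), h = ∑_k w_k ℓ_k, m = -(1/η)·ln(∑_k w_k e^{-η ℓ_k}), and v = ∑_k w_k (ℓ_k - h)^2. Then h - m ≤ ((e^η - η - 1)/η)·v. -/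
open Finset

lemma exp_sub_one_sub_le (η : ℝ) (hη : 0 < η) (y : ℝ) (hy : |y| ≤ η) :
    Real.exp y - 1 - y ≤ ((Real.exp η - 1 - η) / η ^ 2) * y ^ 2 := by
  have hexp : ∀ x : ℝ, Real.exp x - 1 - x = ∑' n : ℕ, x ^ (n + 2) / (Nat.factorial (n + 2) : ℝ) := by
    intro x
    have hs := Real.summable_pow_div_factorial x
    have h2 := Summable.sum_add_tsum_nat_add 2 hs
    have hex : Real.exp x = ∑' n : ℕ, x ^ n / (Nat.factorial n : ℝ) := by
      rw [Real.exp_eq_exp_ℝ, NormedSpace.exp_eq_tsum_div]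
    rw [hex, ← h2]
    simp [Finset.sum_range_succ]
    ring
  have hsl : Summable (fun n : ℕ => y ^ (n + 2) / (Nat.factorial (n + 2) : ℝ)) :=
    (summable_nat_add_iff 2).mpr (Real.summable_pow_div_factorial y)
  have hsr : Summable (fun n : ℕ => y ^ 2 / η ^ 2 * (η ^ (n + 2) / (Nat.factorial (n + 2) : ℝ))) :=
    ((summable_nat_add_iff 2).mpr (Real.summable_pow_div_factorial η)).mul_left _
  have hterm : ∀ n : ℕ, y ^ (n + 2) / (Nat.factorial (n + 2) : ℝ) ≤ y ^ 2 / η ^ 2 * (η ^ (n + 2) / (Nat.factorial (n + 2) : ℝ)) := by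
    intro n
    have hfac : (0 : ℝ) < (Nat.factorial (n + 2) : ℝ) := by positivity
    rw [div_le_iff₀ hfac] at *
    have h1 : y ^ (n + 2) ≤ |y| ^ (n + 2) := by
      calc y ^ (n + 2) ≤ |y ^ (n + 2)| := le_abs_self _
        _ = |y| ^ (n + 2) := by rw [abs_pow]
    have h2 : |y| ^ (n + 2) ≤ |y| ^ n * y ^ 2 := by
      rw [pow_add, sq_abs]
    have h3 : |y| ^ n * y ^ 2 ≤ η ^ n * y ^ 2 :=
      mul_le_mul_of_nonneg_right (pow_le_pow_left₀ (abs_nonneg y) hy n) (sq_nonneg y)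
    have h4 : y ^ 2 / η ^ 2 * (η ^ (n + 2) / (Nat.factorial (n + 2) : ℝ)) * (Nat.factorial (n + 2) : ℝ) = η ^ n * y ^ 2 := by
      field_simp
      ring
    rw [h4]
    linarith
  have hle := Summable.tsum_le_tsum hterm hsl hsr
  rw [← hexp y] at hle
  rw [tsum_mul_left, ← hexp η] at hle
  calc Real.exp y - 1 - y ≤ y ^ 2 / η ^ 2 * (Real.exp η - 1 - η) := hle
    _ = ((Real.exp η - 1 - η) / η ^ 2) * y ^ 2 := by ring

/-- Bernstein's bound for the mixability gap: for `ℓ ∈ [0,1]^K`, a probability vector `w`,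
`η ∈ (0,∞)`, Hedge loss `h`, mix loss `m` and variance `v`, one has
`h - m ≤ ((e^η - η - 1)/η)·v`. -/
theorem bernstein_mixability_gap (K : ℕ) (hK : 1 ≤ K) (ℓ w : Fin K → ℝ)
    (hℓ : ∀ k, ℓ k ∈ Set.Icc (0 : ℝ) 1)
    (hw0 : ∀ k, 0 ≤ w k) (hw1 : ∑ k, w k = 1)
    (η : ℝ) (hη : 0 < η) (h m v : ℝ)
    (hh : h = ∑ k, w k * ℓ k)
    (hm : m = -(1/η) * Real.log (∑ k, w k * Real.exp (-η * ℓ k)))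
    (hv : v = ∑ k, w k * (ℓ k - h)^2) :
    h - m ≤ ((Real.exp η - η - 1) / η) * v := by
  set c := Real.exp η - η - 1 with hc
  set Z := ∑ k, w k * Real.exp (-η * ℓ k) with hZ
  -- Z is positive
  have hex : ∃ k : Fin K, 0 < w k := by
    by_contra hcon
    push_neg at hcon
    have : ∑ k, w k ≤ 0 := Finset.sum_nonpos (fun k _ => hcon k)
    linarith
  obtain ⟨k₀, hk₀⟩ := hex
  have hZpos : 0 < Z := by
    refine Finset.sum_pos' (fun k _ => mul_nonneg (hw0 k) (Real.exp_pos _).le)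
      ⟨k₀, Finset.mem_univ k₀, mul_pos hk₀ (Real.exp_pos _)⟩
  -- bounds on h
  have hh0 : 0 ≤ h := by
    rw [hh]
    exact Finset.sum_nonneg fun k _ => mul_nonneg (hw0 k) (hℓ k).1
  have hh1 : h ≤ 1 := by
    rw [hh, ← hw1]
    exact Finset.sum_le_sum fun k _ => by
      nlinarith [(hℓ k).2, hw0 k]
  -- the centered sum is zero
  have hsum0 : ∑ k, w k * (η * (h - ℓ k)) = 0 := by
    have e1 : ∑ k, w k * (η * (h - ℓ k)) = η * h * (∑ k, w k) - η * (∑ k, w k * ℓ k) := by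
      rw [Finset.mul_sum, Finset.mul_sum, ← Finset.sum_sub_distrib]
      exact Finset.sum_congr rfl fun k _ => by ring
    rw [e1, hw1, ← hh]
    ring
  -- key inequality
  have key : Real.log Z + η * h ≤ c * v := by
    have e2 : Real.log Z + η * h = Real.log (Z * Real.exp (η * h)) := by
      rw [Real.log_mul (ne_of_gt hZpos) (ne_of_gt (Real.exp_pos _)), Real.log_exp]
    have e3 : Z * Real.exp (η * h) = ∑ k, w k * Real.exp (η * (h - ℓ k)) := by
      rw [hZ, Finset.sum_mul]
      refine Finset.sum_congr rfl fun k _ => ?_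
      rw [mul_assoc, ← Real.exp_add]
      ring_nf
    have hpos3 : 0 < Z * Real.exp (η * h) := mul_pos hZpos (Real.exp_pos _)
    have e4 : Real.log (Z * Real.exp (η * h)) ≤ Z * Real.exp (η * h) - 1 :=
      Real.log_le_sub_one_of_pos hpos3
    have e5 : Z * Real.exp (η * h) - 1 = ∑ k, w k * (Real.exp (η * (h - ℓ k)) - 1 - η * (h - ℓ k)) := by
      rw [e3]
      have : (1 : ℝ) = ∑ k, w k := hw1.symm
      calc (∑ k, w k * Real.exp (η * (h - ℓ k))) - 1
          = (∑ k, w k * Real.exp (η * (h - ℓ k))) - (∑ k, w k) - (∑ k, w k * (η * (h - ℓ k))) := by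
            rw [hsum0, hw1]; ring
        _ = ∑ k, w k * (Real.exp (η * (h - ℓ k)) - 1 - η * (h - ℓ k)) := by
            rw [← Finset.sum_sub_distrib, ← Finset.sum_sub_distrib]
            exact Finset.sum_congr rfl fun k _ => by ring
    have e6 : ∑ k, w k * (Real.exp (η * (h - ℓ k)) - 1 - η * (h - ℓ k)) ≤ c * v := by
      rw [hv, Finset.mul_sum]
      refine Finset.sum_le_sum fun k _ => ?_
      have hyabs : |η * (h - ℓ k)| ≤ η := by
        rw [abs_mul, abs_of_pos hη]
        have : |h - ℓ k| ≤ 1 := by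
          rw [abs_le]
          constructor <;> [linarith [(hℓ k).2]; linarith [(hℓ k).1]]
        nlinarith
      have hb := exp_sub_one_sub_le η hη (η * (h - ℓ k)) hyabs
      have hcalc : ((Real.exp η - 1 - η) / η ^ 2) * (η * (h - ℓ k)) ^ 2 = c * (ℓ k - h) ^ 2 := by
        rw [hc]
        field_simp
        ring
      rw [hcalc] at hb
      calc w k * (Real.exp (η * (h - ℓ k)) - 1 - η * (h - ℓ k))
          ≤ w k * (c * (ℓ k - h) ^ 2) := mul_le_mul_of_nonneg_left hb (hw0 k)
        _ = c * (w k * (ℓ k - h) ^ 2) := by ring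
    linarith [e2, e4, e5 ▸ e4]
  -- conclude
  have hfin : h - m = (Real.log Z + η * h) / η := by
    rw [hm]
    field_simp
    ring
  rw [hfin]
  have : (Real.log Z + η * h) / η ≤ (c * v) / η := div_le_div_of_nonneg_right key hη.le
  calc (Real.log Z + η * h) / η ≤ (c * v) / η := this
    _ = (c / η) * v := by ring
end

section
/- For all x > 0, the function f(x) = (e^x - x²/2 - x - 1)/(x·e^x - x² - x) satisfies f(x) ≤ 1/3. -/
open Real Set

lemma aux1 (x : ℝ) : (1 - x) * Real.exp x ≤ 1 := by
  have h : 1 - x ≤ Real.exp (-x) := by linarith [Real.add_one_le_exp (-x)]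
  have h2 := mul_le_mul_of_nonneg_right h (Real.exp_pos x).le
  rwa [← Real.exp_add, neg_add_cancel, Real.exp_zero] at h2

lemma g1_nonneg (x : ℝ) (hx : 0 ≤ x) : 0 ≤ x + 2 - (2 - x) * Real.exp x := by
  set g1 : ℝ → ℝ := fun y => y + 2 - (2 - y) * Real.exp y with hg1
  have hderiv : ∀ y : ℝ, HasDerivAt g1 (1 - (1 - y) * Real.exp y) y := by
    intro y
    have h1 : HasDerivAt (fun y : ℝ => (2 - y) * Real.exp y)
        ((-1) * Real.exp y + (2 - y) * Real.exp y) y :=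
      (HasDerivAt.mul ((hasDerivAt_id y).const_sub 2) (Real.hasDerivAt_exp y))
    have h2 : HasDerivAt (fun y : ℝ => y + 2) 1 y := (hasDerivAt_id y).add_const 2
    have := h2.sub h1
    exact this.congr_deriv (by ring)
  have hmono : MonotoneOn g1 (Ici (0:ℝ)) := by
    apply monotoneOn_of_deriv_nonneg (convex_Ici 0)
    · exact Continuous.continuousOn (by continuity)
    · intro y hy
      exact (hderiv y).differentiableAt.differentiableWithinAt
    · intro y hy
      rw [(hderiv y).deriv]
      nlinarith [aux1 y]
  have h0 : g1 0 = 0 := by simp [hg1]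
  have h := hmono (self_mem_Ici) hx hx
  rw [h0] at h
  exact h

lemma g_nonneg (x : ℝ) (hx : 0 ≤ x) : 0 ≤ x^2/2 + 2*x + 3 - (3 - x) * Real.exp x := by
  set g : ℝ → ℝ := fun y => y^2/2 + 2*y + 3 - (3 - y) * Real.exp y with hg
  have hderiv : ∀ y : ℝ, HasDerivAt g (y + 2 - (2 - y) * Real.exp y) y := by
    intro y
    have h1 : HasDerivAt (fun y : ℝ => (3 - y) * Real.exp y)
        ((-1) * Real.exp y + (3 - y) * Real.exp y) y :=
      (HasDerivAt.mul ((hasDerivAt_id y).const_sub 3) (Real.hasDerivAt_exp y))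
    have h2 : HasDerivAt (fun y : ℝ => y^2/2 + 2*y + 3) (y + 2) y := by
      have h := ((hasDerivAt_pow 2 y).div_const 2).add
        (((hasDerivAt_id y).const_mul 2).add_const 3)
      have e1 : ((fun x : ℝ => x^2/2) + fun x : ℝ => 2 * id x + 3) = (fun y : ℝ => y^2/2 + 2*y + 3) := by
        funext z; simp [id]; ring
      rw [e1] at h
      exact h.congr_deriv (by norm_num)
    have := h2.sub h1
    exact this.congr_deriv (by ring)
  have hmono : MonotoneOn g (Ici (0:ℝ)) := by
    apply monotoneOn_of_deriv_nonneg (convex_Ici 0)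
    · exact Continuous.continuousOn (by continuity)
    · intro y hy
      exact (hderiv y).differentiableAt.differentiableWithinAt
    · intro y hy
      rw [(hderiv y).deriv]
      rw [interior_Ici] at hy
      exact g1_nonneg y (le_of_lt hy)
  have h0 : g 0 = 0 := by simp [hg]
  have h := hmono (self_mem_Ici) hx hx
  rw [h0] at h
  exact h

/-- For all `x > 0`, `f(x) = (e^x - x²/2 - x - 1)/(x·e^x - x² - x) ≤ 1/3`. -/
theorem f_le_one_third (x : ℝ) (hx : 0 < x) :
    (Real.exp x - x^2 / 2 - x - 1) / (x * Real.exp x - x^2 - x) ≤ 1/3 := by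
  have hexp : x + 1 < Real.exp x := by
    have := Real.add_one_lt_exp (ne_of_gt hx)
    linarith
  have hD : 0 < x * Real.exp x - x^2 - x := by nlinarith
  rw [div_le_div_iff₀ hD (by norm_num : (0:ℝ) < 3)]
  nlinarith [g_nonneg x hx.le]
end

section
/- (Sharpened Bernstein relation) Let ℓ ∈ [0,1]^K, w a probability vector, η ∈ (0,∞], h = ∑_k w_k ℓ_k, m the mix loss at rate η, δ = h - m, and v = ∑_k w_k (ℓ_k - h)^2. Then δ/η ≤ v/2 + δ/3, where δ/η is interpreted as 0 when η = ∞. -/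
open Finset ENNReal


private lemma aux_q {x : ℝ} (hx : 0 ≤ x) : 0 ≤ (x - 2) * Real.exp x + x + 2 := by
  have hq : ∀ t : ℝ, HasDerivAt (fun t => (t - 2) * Real.exp t + t + 2)
      ((t - 1) * Real.exp t + 1) t := by
    intro t
    have h1 : HasDerivAt (fun t : ℝ => (t - 2) * Real.exp t)
        (1 * Real.exp t + (t - 2) * Real.exp t) t :=
      ((hasDerivAt_id t).sub_const 2).mul (Real.hasDerivAt_exp t)
    have := (h1.add_const 0).add (hasDerivAt_id t) |>.add_const 2
    simp only [add_zero] at this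
    exact this.congr_deriv (by ring)
  have hmono : Monotone (fun t => (t - 2) * Real.exp t + t + 2) := by
    apply monotone_of_hasDerivAt_nonneg hq
    rw [Pi.le_def]
    intro t
    simp only [Pi.zero_apply]
    have h1 : 1 - t ≤ Real.exp (-t) := by
      have := Real.add_one_le_exp (-t); linarith
    have h2 : Real.exp (-t) * Real.exp t = 1 := by
      rw [← Real.exp_add]; simp
    have h3 := Real.exp_pos t
    nlinarith [mul_le_mul_of_nonneg_right h1 h3.le]
  have := hmono hx
  simpa using this

private lemma aux_g {x : ℝ} (hx : 0 ≤ x) :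
    0 ≤ (x - 3) * Real.exp x + x ^ 2 / 2 + 2 * x + 3 := by
  set g : ℝ → ℝ := fun t => (t - 3) * Real.exp t + t ^ 2 / 2 + 2 * t + 3 with hg
  have hd : ∀ t : ℝ, HasDerivAt g ((t - 2) * Real.exp t + t + 2) t := by
    intro t
    have h1 : HasDerivAt (fun t : ℝ => (t - 3) * Real.exp t)
        (1 * Real.exp t + (t - 3) * Real.exp t) t :=
      ((hasDerivAt_id t).sub_const 3).mul (Real.hasDerivAt_exp t)
    have h2 : HasDerivAt (fun t : ℝ => t ^ 2 / 2) t t := by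
      have := (hasDerivAt_pow 2 t).div_const 2
      simpa using this
    have := ((h1.add h2).add ((hasDerivAt_id t).const_mul 2)).add_const 3
    exact this.congr_deriv (by ring)
  have hmono : MonotoneOn g (Set.Ici 0) := by
    apply monotoneOn_of_hasDerivWithinAt_nonneg (convex_Ici 0)
      (fun t _ => (hd t).continuousAt.continuousWithinAt)
      (fun t ht => ((hd t).hasDerivWithinAt))
    intro t ht
    rw [interior_Ici] at ht
    exact aux_q ht.le
  have := hmono Set.self_mem_Ici hx hx
  simp only [hg] at this
  norm_num at this
  linarith


private lemma aux_exp_quad_neg {u : ℝ} (hu : u ≤ 0) : Real.exp u ≤ 1 + u + u ^ 2 / 2 := by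
  set r : ℝ → ℝ := fun t => 1 + t + t ^ 2 / 2 - Real.exp t with hr
  have hd : ∀ t : ℝ, HasDerivAt r (1 + t - Real.exp t) t := by
    intro t
    have h2 : HasDerivAt (fun t : ℝ => t ^ 2 / 2) t t := by
      have := (hasDerivAt_pow 2 t).div_const 2
      simpa using this
    have := (((hasDerivAt_const t (1:ℝ)).add (hasDerivAt_id t)).add h2).sub (Real.hasDerivAt_exp t)
    exact this.congr_deriv (by ring)
  have hanti : AntitoneOn r (Set.Iic 0) := by
    apply antitoneOn_of_hasDerivWithinAt_nonpos (convex_Iic 0)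
      (fun t _ => (hd t).continuousAt.continuousWithinAt)
      (fun t ht => (hd t).hasDerivWithinAt)
    intro t ht
    have := Real.add_one_le_exp t
    linarith
  have := hanti hu Set.self_mem_Iic hu
  simp only [hr] at this
  norm_num at this
  linarith

private lemma aux_psi_mono {u x : ℝ} (hu : 0 < u) (hux : u ≤ x) :
    (Real.exp u - u - 1) / u ^ 2 ≤ (Real.exp x - x - 1) / x ^ 2 := by
  set F : ℝ → ℝ := fun t => (Real.exp t - t - 1) / t ^ 2 with hF
  have hd : ∀ t : ℝ, t ≠ 0 → HasDerivAt F
      (((Real.exp t - 1) * t ^ 2 - (Real.exp t - t - 1) * (2 * t)) / (t ^ 2) ^ 2) t := by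
    intro t ht
    have hn : HasDerivAt (fun t : ℝ => Real.exp t - t - 1) (Real.exp t - 1) t := by
      have := ((Real.hasDerivAt_exp t).sub (hasDerivAt_id t)).sub_const 1
      simpa using this
    have hden : HasDerivAt (fun t : ℝ => t ^ 2) (2 * t) t := by
      have := hasDerivAt_pow 2 t
      simpa using this
    exact hn.div hden (pow_ne_zero 2 ht)
  have hmono : MonotoneOn F (Set.Ioi 0) := by
    apply monotoneOn_of_hasDerivWithinAt_nonneg (convex_Ioi 0)
      (fun t ht => ((hd t (ne_of_gt ht)).continuousAt.continuousWithinAt))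
      (fun t ht => by
        rw [interior_Ioi] at ht
        exact (hd t (ne_of_gt ht)).hasDerivWithinAt)
    intro t ht
    rw [interior_Ioi] at ht
    have ht' : (0:ℝ) < t := ht
    have hnum : (Real.exp t - 1) * t ^ 2 - (Real.exp t - t - 1) * (2 * t)
        = t * ((t - 2) * Real.exp t + t + 2) := by ring
    rw [hnum]
    have := aux_q ht'.le
    positivity
  exact hmono hu (lt_of_lt_of_le hu hux) hux

private lemma aux_key {x u : ℝ} (hx : 0 < x) (hu : u ≤ x) :
    Real.exp u ≤ 1 + u + (Real.exp x - x - 1) / x ^ 2 * u ^ 2 := by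
  have hC : 1 / 2 ≤ (Real.exp x - x - 1) / x ^ 2 := by
    have := Real.quadratic_le_exp_of_nonneg hx.le
    rw [le_div_iff₀ (by positivity)]
    nlinarith
  rcases le_or_gt u 0 with h0 | h0
  · have h1 := aux_exp_quad_neg h0
    nlinarith [sq_nonneg u]
  · have := aux_psi_mono h0 hu
    rw [div_le_div_iff₀ (by positivity) (by positivity)] at this
    have hu2 : (0:ℝ) < u ^ 2 := by positivity
    have : Real.exp u - u - 1 ≤ (Real.exp x - x - 1) / x ^ 2 * u ^ 2 := by
      rw [div_mul_eq_mul_div, le_div_iff₀ (by positivity)]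
      linarith
    linarith

/-- Sharpened Bernstein relation: for losses `ℓ ∈ [0,1]^K`, probability weights `w`,
learning rate `η ∈ (0,∞]`, Hedge loss `h`, mix loss `m` (for `η = ∞` it is the minimal
loss over the support of `w`), mixability gap `δ = h - m` and variance `v`, we have
`δ/η ≤ v/2 + δ/3`, where `δ/η` is interpreted as `0` when `η = ∞`. -/
theorem sharpened_bernstein (K : ℕ) (hK : 1 ≤ K) (ℓ w : Fin K → ℝ)
    (hℓ : ∀ k, ℓ k ∈ Set.Icc (0 : ℝ) 1)
    (hw0 : ∀ k, 0 ≤ w k) (hw1 : ∑ k, w k = 1)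
    (η : ℝ≥0∞) (hη : 0 < η) (h m δ v : ℝ)
    (hh : h = ∑ k, w k * ℓ k)
    (hm : m = if η = ⊤ then sInf (ℓ '' {k | w k ≠ 0})
      else -(1/η.toReal) * Real.log (∑ k, w k * Real.exp (-η.toReal * ℓ k)))
    (hδ : δ = h - m)
    (hv : v = ∑ k, w k * (ℓ k - h)^2) :
    (if η = ⊤ then 0 else δ / η.toReal) ≤ v / 2 + δ / 3 := by
  have v0 : 0 ≤ v := by
    rw [hv]; exact Finset.sum_nonneg fun k _ => mul_nonneg (hw0 k) (sq_nonneg _)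
  have h0 : 0 ≤ h := by
    rw [hh]; exact Finset.sum_nonneg fun k _ => mul_nonneg (hw0 k) (hℓ k).1
  have h1 : h ≤ 1 := by
    rw [hh, ← hw1]
    exact Finset.sum_le_sum fun k _ => by
      nlinarith [(hℓ k).2, hw0 k]
  by_cases htop : η = ⊤
  · rw [if_pos htop] at hm ⊢
    -- show δ ≥ 0
    have hne : ∃ k, w k ≠ 0 := by
      by_contra hc
      push_neg at hc
      simp [hc] at hw1
    have hbdd : BddBelow (ℓ '' {k | w k ≠ 0}) := by
      refine ⟨0, fun y hy => ?_⟩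
      obtain ⟨k, -, rfl⟩ := hy
      exact (hℓ k).1
    have hmh : m ≤ h := by
      have hterm : ∀ k, w k * m ≤ w k * ℓ k := by
        intro k
        by_cases hk : w k = 0
        · simp [hk]
        · have : m ≤ ℓ k := hm ▸ csInf_le hbdd ⟨k, hk, rfl⟩
          exact mul_le_mul_of_nonneg_left this (hw0 k)
      calc m = (∑ k, w k) * m := by rw [hw1, one_mul]
        _ = ∑ k, w k * m := by rw [Finset.sum_mul]
        _ ≤ ∑ k, w k * ℓ k := Finset.sum_le_sum fun k _ => hterm k
        _ = h := hh.symm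
    have : 0 ≤ δ := by rw [hδ]; linarith
    linarith
  · rw [if_neg htop] at hm ⊢
    set x := η.toReal with hxdef
    have hx : 0 < x := ENNReal.toReal_pos hη.ne' htop
    set C := (Real.exp x - x - 1) / x ^ 2 with hC
    have hC0 : 1 / 2 ≤ C := by
      rw [hC, le_div_iff₀ (by positivity)]
      nlinarith [Real.quadratic_le_exp_of_nonneg hx.le]
    set S := ∑ k, w k * Real.exp (-x * ℓ k) with hS
    have hterm_eq : ∀ k, w k * Real.exp (-x * ℓ k)
        = Real.exp (-(x * h)) * (w k * Real.exp (x * (h - ℓ k))) := by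
      intro k
      rw [mul_comm (Real.exp _) _, mul_assoc, ← Real.exp_add]
      ring_nf
    have hS_low : Real.exp (-(x * h)) ≤ S := by
      have hsum1 : ∑ k, w k * (1 + x * (h - ℓ k)) = 1 := by
        have : ∀ k ∈ Finset.univ, w k * (1 + x * (h - ℓ k))
            = w k + x * h * w k - x * (w k * ℓ k) := fun k _ => by ring
        rw [Finset.sum_congr rfl this, Finset.sum_sub_distrib, Finset.sum_add_distrib,
          ← Finset.mul_sum, ← Finset.mul_sum, hw1, ← hh]
        ring
      calc Real.exp (-(x * h)) = Real.exp (-(x * h)) * ∑ k, w k * (1 + x * (h - ℓ k)) := by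
            rw [hsum1, mul_one]
        _ ≤ Real.exp (-(x * h)) * ∑ k, w k * Real.exp (x * (h - ℓ k)) := by
            apply mul_le_mul_of_nonneg_left _ (Real.exp_pos _).le
            apply Finset.sum_le_sum
            intro k _
            exact mul_le_mul_of_nonneg_left
              (by have := Real.add_one_le_exp (x * (h - ℓ k)); linarith) (hw0 k)
        _ = S := by rw [hS, Finset.mul_sum]; exact Finset.sum_congr rfl fun k _ => (hterm_eq k).symm
    have hS_up : S ≤ Real.exp (-(x * h)) * (1 + C * x ^ 2 * v) := by
      have hsum2 : ∑ k, w k * (1 + x * (h - ℓ k) + C * (x * (h - ℓ k)) ^ 2)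
          = 1 + C * x ^ 2 * v := by
        have : ∀ k ∈ Finset.univ, w k * (1 + x * (h - ℓ k) + C * (x * (h - ℓ k)) ^ 2)
            = (w k + x * h * w k - x * (w k * ℓ k)) + C * x ^ 2 * (w k * (ℓ k - h) ^ 2) :=
          fun k _ => by ring
        rw [Finset.sum_congr rfl this, Finset.sum_add_distrib, Finset.sum_sub_distrib,
          Finset.sum_add_distrib, ← Finset.mul_sum, ← Finset.mul_sum, ← Finset.mul_sum,
          hw1, ← hh, ← hv]
        ring
      calc S = Real.exp (-(x * h)) * ∑ k, w k * Real.exp (x * (h - ℓ k)) := by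
            rw [hS, Finset.mul_sum]; exact Finset.sum_congr rfl fun k _ => hterm_eq k
        _ ≤ Real.exp (-(x * h)) * ∑ k, w k * (1 + x * (h - ℓ k) + C * (x * (h - ℓ k)) ^ 2) := by
            apply mul_le_mul_of_nonneg_left _ (Real.exp_pos _).le
            apply Finset.sum_le_sum
            intro k _
            apply mul_le_mul_of_nonneg_left _ (hw0 k)
            exact aux_key hx (by nlinarith [(hℓ k).1])
        _ = Real.exp (-(x * h)) * (1 + C * x ^ 2 * v) := by rw [hsum2]
    have hSpos : 0 < S := lt_of_lt_of_le (Real.exp_pos _) hS_low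
    have hlog_low : -(x * h) ≤ Real.log S := by
      have := Real.log_le_log (Real.exp_pos _) hS_low
      rwa [Real.log_exp] at this
    have hlog_up : Real.log S ≤ -(x * h) + C * x ^ 2 * v := by
      have h1' : (0:ℝ) < 1 + C * x ^ 2 * v := by
        have : 0 ≤ C * x ^ 2 * v := mul_nonneg (mul_nonneg (by linarith) (sq_nonneg x)) v0
        linarith
      calc Real.log S ≤ Real.log (Real.exp (-(x * h)) * (1 + C * x ^ 2 * v)) :=
            Real.log_le_log hSpos hS_up
        _ = -(x * h) + Real.log (1 + C * x ^ 2 * v) := by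
            rw [Real.log_mul (Real.exp_pos _).ne' h1'.ne', Real.log_exp]
        _ ≤ -(x * h) + C * x ^ 2 * v := by
            have := Real.log_le_sub_one_of_pos h1'
            linarith
    have hδx : δ * x = x * h + Real.log S := by
      rw [hδ, hm]
      field_simp
      ring
    have hδ0 : 0 ≤ δ := by
      have h' : 0 ≤ δ * x := by rw [hδx]; linarith
      nlinarith
    have hδxE : δ * x ≤ (Real.exp x - x - 1) * v := by
      calc δ * x = x * h + Real.log S := hδx
        _ ≤ C * x ^ 2 * v := by linarith
        _ = (Real.exp x - x - 1) * v := by rw [hC]; field_simp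
    have hB : (3 - x) * (Real.exp x - x - 1) ≤ 3 * x ^ 2 / 2 := by
      nlinarith [aux_g hx.le]
    rcases le_or_gt 3 x with h3 | h3
    · have : δ / x ≤ δ / 3 := div_le_div_of_nonneg_left hδ0 (by norm_num) h3
      linarith
    · rw [div_le_iff₀ hx]
      nlinarith [mul_le_mul_of_nonneg_right hδxE (by linarith : (0:ℝ) ≤ 3 - x),
        mul_le_mul_of_nonneg_right hB v0, mul_pos hx hx]
end

section
/- (AdaHedge quadratic bound) For losses in [0,1]^K, AdaHedge's cumulative mixability gap satisfies (Δ_T)² ≤ V_T·ln K + (1 + (2/3)·ln K)·Δ_T, where V_T = ∑_{t=1}^T v_t is the cumulative loss variance under AdaHedge's weights. -/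
open Finset

noncomputable section

lemma AH.nonneg_of_deriv {f f' : ℝ → ℝ} (hd : ∀ x, HasDerivAt f (f' x) x)
    (h0 : f 0 = 0) (hf' : ∀ x, 0 ≤ x → 0 ≤ f' x) : ∀ x, 0 ≤ x → 0 ≤ f x := by
  intro x hx
  have hmono : MonotoneOn f (Set.Ici (0:ℝ)) := by
    apply monotoneOn_of_deriv_nonneg (convex_Ici 0)
      (fun y _ => (hd y).continuousAt.continuousWithinAt)
      (fun y _ => (hd y).differentiableAt.differentiableWithinAt)
    intro y hy
    rw [interior_Ici] at hy
    rw [(hd y).deriv]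
    exact hf' y (le_of_lt hy)
  calc (0:ℝ) = f 0 := h0.symm
  _ ≤ f x := hmono (by simp) (by simpa using hx) hx

lemma AH.exp_neg_le (z : ℝ) (hz : 0 ≤ z) : Real.exp (-z) ≤ 1 - z + z^2/2 := by
  have := AH.nonneg_of_deriv (f := fun u => 1 - u + u^2/2 - Real.exp (-u))
    (f' := fun u => -1 + u + Real.exp (-u)) ?_ (by norm_num) ?_ z hz
  · simpa using this
  · intro u
    have h1 : HasDerivAt (fun u : ℝ => Real.exp (-u)) (-Real.exp (-u)) u := by
      convert (hasDerivAt_neg u).exp using 1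
      ring
    have h2 : HasDerivAt (fun u : ℝ => 1 - u + u^2/2)
        ((0 - 1) + (↑(2:ℕ) * u^(2-1)) / 2) u :=
      ((hasDerivAt_const u (1:ℝ)).sub (hasDerivAt_id u)).add ((hasDerivAt_pow 2 u).div_const 2)
    have h3 := h2.sub h1
    refine h3.congr_deriv ?_
    push_cast
    ring
  · intro u hu
    have := Real.add_one_le_exp (-u)
    show 0 ≤ -1 + u + Real.exp (-u)
    linarith

lemma AH.psi_nonneg (u : ℝ) (hu : 0 ≤ u) : 0 ≤ (u - 2) * Real.exp u + u + 2 := by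
  apply AH.nonneg_of_deriv (f' := fun u => (u - 1) * Real.exp u + 1) ?_ (by simp) ?_ u hu
  · intro y
    have h1 : HasDerivAt (fun y : ℝ => (y - 2) * Real.exp y)
        (1 * Real.exp y + (y - 2) * Real.exp y) y :=
      ((hasDerivAt_id y).sub_const 2).mul (Real.hasDerivAt_exp y)
    have h2 : HasDerivAt (fun y : ℝ => ((y - 2) * Real.exp y + y) + 2)
        ((1 * Real.exp y + (y - 2) * Real.exp y) + 1) y :=
      (h1.add (hasDerivAt_id y)).add_const 2
    convert h2 using 1
    ring
  · intro y hy
    show 0 ≤ (y - 1) * Real.exp y + 1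
    have hE : 0 < Real.exp y := Real.exp_pos y
    have h2 : Real.exp (-y) * Real.exp y = 1 := by rw [← Real.exp_add]; simp
    have := Real.add_one_le_exp (-y)
    nlinarith [Real.exp_pos (-y)]

lemma AH.key_numeric (η : ℝ) (hη : 0 ≤ η) :
    (Real.exp η - η - 1) * (3 - η) ≤ 3/2 * η^2 := by
  have := AH.nonneg_of_deriv
    (f := fun u => 3/2 * u^2 - (Real.exp u - u - 1) * (3 - u))
    (f' := fun u => (u - 2) * Real.exp u + u + 2) ?_ (by norm_num) ?_ η hη
  · simpa using this
  · intro y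
    have h1 : HasDerivAt (fun y : ℝ => (Real.exp y - y - 1) * (3 - y))
        ((Real.exp y - 1) * (3 - y) + (Real.exp y - y - 1) * (0 - 1)) y :=
      (((Real.hasDerivAt_exp y).sub (hasDerivAt_id' y)).sub_const 1).mul
        ((hasDerivAt_const y (3:ℝ)).sub (hasDerivAt_id' y))
    have h2 : HasDerivAt (fun y : ℝ => 3/2 * y^2) ((3/2 : ℝ) * (↑(2:ℕ) * y^(2-1))) y :=
      (hasDerivAt_pow 2 y).const_mul (3/2 : ℝ)
    refine (h2.sub h1).congr_deriv ?_
    push_cast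
    ring
  · intro y hy
    exact AH.psi_nonneg y hy

/-- monotonicity of (e^u - u - 1)/u²: for 0 < a ≤ b, b²(e^a-a-1) ≤ a²(e^b-b-1). -/
lemma AH.phi_mono {a b : ℝ} (ha : 0 < a) (hab : a ≤ b) :
    b^2 * (Real.exp a - a - 1) ≤ a^2 * (Real.exp b - b - 1) := by
  have hmono : MonotoneOn (fun u => (Real.exp u - u - 1) / u^2) (Set.Ioi (0:ℝ)) := by
    apply monotoneOn_of_deriv_nonneg (convex_Ioi 0)
    · intro y hy
      have hy0 : y ≠ 0 := ne_of_gt hy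
      exact (((Real.continuous_exp.sub continuous_id).sub continuous_const).continuousOn.div
        (continuous_pow 2).continuousOn (fun x hx => pow_ne_zero 2 (ne_of_gt hx))) y hy
    · rw [interior_Ioi]
      intro y hy
      have hy0 : (y:ℝ)^2 ≠ 0 := pow_ne_zero 2 (ne_of_gt hy)
      exact (((Real.differentiable_exp.sub differentiable_id).sub
        (differentiable_const 1)).differentiableAt.div
        ((differentiable_pow 2).differentiableAt) hy0).differentiableWithinAt
    · rw [interior_Ioi]
      intro y hy
      have hy0 : y ≠ 0 := ne_of_gt hy
      have h1 : HasDerivAt (fun u : ℝ => (Real.exp u - u - 1) / u^2)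
          (((Real.exp y - 1) * y^2 - (Real.exp y - y - 1) * (↑(2:ℕ) * y^(2-1))) / (y^2)^2) y :=
        ((((Real.hasDerivAt_exp y).sub (hasDerivAt_id' y)).sub_const 1).div
          (hasDerivAt_pow 2 y) (pow_ne_zero 2 hy0))
      rw [h1.deriv]
      apply div_nonneg _ (by positivity)
      have hpsi := AH.psi_nonneg y (le_of_lt hy)
      have : (Real.exp y - 1) * y^2 - (Real.exp y - y - 1) * (↑(2:ℕ) * y^(2-1)) =
          y * ((y - 2) * Real.exp y + y + 2) := by push_cast; ring
      rw [this]
      exact mul_nonneg (le_of_lt hy) hpsi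
  have hb : 0 < b := lt_of_lt_of_le ha hab
  have := hmono (Set.mem_Ioi.2 ha) (Set.mem_Ioi.2 hb) hab
  rw [div_le_div_iff₀ (by positivity) (by positivity)] at this
  linarith

/-- pointwise Bennett bound: for s ≥ 0, y ≤ 1: e^{sy} ≤ 1 + sy + y²(e^s - s - 1). -/
lemma AH.pointwise (s y : ℝ) (hs : 0 ≤ s) (hy : y ≤ 1) :
    Real.exp (s * y) ≤ 1 + s * y + y^2 * (Real.exp s - s - 1) := by
  rcases le_or_gt y 0 with h0 | h0
  · have hz : 0 ≤ -(s*y) := by nlinarith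
    have h1 := AH.exp_neg_le (-(s*y)) hz
    rw [neg_neg] at h1
    have h2 : 1 + s + s^2/2 ≤ Real.exp s := Real.quadratic_le_exp_of_nonneg hs
    nlinarith [sq_nonneg y, sq_nonneg (s*y), sq_nonneg s]
  · rcases eq_or_lt_of_le hs with rfl | hs'
    · simp
    · have ha : 0 < s * y := by positivity
      have hab : s * y ≤ s := by nlinarith
      have := AH.phi_mono ha hab
      have hs2 : (0:ℝ) < s^2 := by positivity
      nlinarith [sq_nonneg y]


lemma AH.core {K : ℕ} (w x : Fin K → ℝ) (η : ℝ) (hη : 0 < η)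
    (hw : ∀ k, 0 ≤ w k) (hw1 : ∑ k, w k = 1)
    (hx0 : ∀ k, 0 ≤ x k) (hx1 : ∀ k, x k ≤ 1) :
    0 ≤ (1/η) * Real.log (∑ k, w k * Real.exp (η * ((∑ j, w j * x j) - x k))) ∧
    (1/η) * Real.log (∑ k, w k * Real.exp (η * ((∑ j, w j * x j) - x k))) ≤ 1 ∧
    3 * ((1/η) * Real.log (∑ k, w k * Real.exp (η * ((∑ j, w j * x j) - x k)))) ≤
      3/2 * η * (∑ k, w k * (x k - ∑ j, w j * x j)^2)
        + η * ((1/η) * Real.log (∑ k, w k * Real.exp (η * ((∑ j, w j * x j) - x k)))) := by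
  set h := ∑ j, w j * x j with hh
  set v := ∑ k, w k * (x k - h)^2 with hv
  set S := ∑ k, w k * Real.exp (η * (h - x k)) with hS
  set δ := (1/η) * Real.log S with hδ
  have hh1 : h ≤ 1 := by
    rw [hh, ← hw1]
    exact Finset.sum_le_sum fun k _ => by nlinarith [hw k, hx1 k, hx0 k]
  have hh0 : 0 ≤ h := Finset.sum_nonneg fun k _ => mul_nonneg (hw k) (hx0 k)
  have hwh : ∑ k, w k * (η * (h - x k)) = 0 := by
    have e : ∀ k, w k * (η * (h - x k)) = η * h * w k - η * (w k * x k) := fun k => by ring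
    simp only [e, Finset.sum_sub_distrib, ← Finset.mul_sum, hw1, ← hh]
    ring
  have hv0 : 0 ≤ v := Finset.sum_nonneg fun k _ => mul_nonneg (hw k) (sq_nonneg _)
  have hC : 0 ≤ Real.exp η - η - 1 := by have := Real.add_one_le_exp η; linarith
  have hS1 : 1 ≤ S := by
    have e1 : ∑ k, w k * (1 + η * (h - x k)) = 1 := by
      simp only [mul_add, mul_one, Finset.sum_add_distrib, hw1, hwh]; ring
    rw [← e1]
    exact Finset.sum_le_sum fun k _ => by
      have := Real.add_one_le_exp (η * (h - x k))
      nlinarith [hw k]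
  have hSexp : S ≤ Real.exp η := by
    calc S ≤ ∑ k, w k * Real.exp η := by
          apply Finset.sum_le_sum
          intro k _
          have h1 : η * (h - x k) ≤ η := by nlinarith [hx0 k]
          exact mul_le_mul_of_nonneg_left (Real.exp_le_exp.2 h1) (hw k)
    _ = Real.exp η := by rw [← Finset.sum_mul, hw1, one_mul]
  have hSv : S ≤ 1 + v * (Real.exp η - η - 1) := by
    have e1 : ∑ k, w k * (1 + η * (h - x k) + (h - x k)^2 * (Real.exp η - η - 1))
        = 1 + v * (Real.exp η - η - 1) := by
      simp only [mul_add, mul_one, Finset.sum_add_distrib, hw1, hwh]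
      rw [hv, Finset.sum_mul]
      have : ∀ k, w k * ((h - x k)^2 * (Real.exp η - η - 1))
          = w k * (x k - h)^2 * (Real.exp η - η - 1) := fun k => by ring
      simp only [this]
      ring
    rw [← e1]
    exact Finset.sum_le_sum fun k _ => by
      have hp := AH.pointwise η (h - x k) (le_of_lt hη) (by nlinarith [hx0 k])
      nlinarith [hw k]
  have hS0 : (0:ℝ) < S := lt_of_lt_of_le one_pos hS1
  have hlog0 : 0 ≤ Real.log S := Real.log_nonneg hS1
  have hδ0 : 0 ≤ δ := mul_nonneg (by positivity) hlog0
  have hδ1 : δ ≤ 1 := by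
    have : Real.log S ≤ η := by
      calc Real.log S ≤ Real.log (Real.exp η) := Real.log_le_log hS0 hSexp
      _ = η := Real.log_exp η
    rw [hδ]
    rw [div_mul_eq_mul_div, one_mul, div_le_one hη]
    exact this
  refine ⟨hδ0, hδ1, ?_⟩
  -- δ ≤ v*(e^η - η - 1)/η
  have hδv : δ * η ≤ v * (Real.exp η - η - 1) := by
    have h1 : Real.log S ≤ v * (Real.exp η - η - 1) := by
      calc Real.log S ≤ S - 1 := Real.log_le_sub_one_of_pos hS0
      _ ≤ v * (Real.exp η - η - 1) := by linarith
    rw [hδ]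
    calc 1/η * Real.log S * η = Real.log S := by field_simp
    _ ≤ _ := h1
  -- target: 3δ ≤ (3/2) η v + η δ, i.e. δ(3-η) ≤ (3/2)ηv
  rcases le_or_gt 3 η with h3 | h3
  · nlinarith
  · have hk := AH.key_numeric η (le_of_lt hη)
    -- δη(3-η) ≤ v C (3-η) ≤ v (3/2) η²  → divide by η
    have h5 : δ * η * (3 - η) ≤ v * (3/2 * η^2) := by
      calc δ * η * (3 - η) ≤ v * (Real.exp η - η - 1) * (3 - η) := by nlinarith
      _ ≤ v * (3/2 * η^2) := by nlinarith
    nlinarith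

section Hedge
variable {K : ℕ} [NeZero K] (ℓ : ℕ → Fin K → ℝ)

lemma AH.leaders_nonempty (L : Fin K → ℝ) : (leaders L).Nonempty := by
  obtain ⟨k, _, hk⟩ := Finset.exists_mem_eq_inf'
    (⟨⟨0, Nat.pos_of_ne_zero (NeZero.ne K)⟩, Finset.mem_univ _⟩ :
      (Finset.univ : Finset (Fin K)).Nonempty) L
  exact ⟨k, Finset.mem_filter.2 ⟨Finset.mem_univ k, hk.symm⟩⟩

lemma AH.wts_nonneg (t : ℕ) (D : ℝ) (k : Fin K) : 0 ≤ wts ℓ t D k := by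
  unfold wts
  split
  · split
    · positivity
    · exact le_rfl
  · apply div_nonneg (le_of_lt (Real.exp_pos _))
    exact le_of_lt (Finset.sum_pos (fun j _ => Real.exp_pos _)
      ⟨⟨0, Nat.pos_of_ne_zero (NeZero.ne K)⟩, Finset.mem_univ _⟩)

lemma AH.Z_pos (t : ℕ) (η : ℝ) : 0 < ∑ j : Fin K, Real.exp (-η * cumLoss ℓ t j) :=
  Finset.sum_pos (fun j _ => Real.exp_pos _)
    ⟨⟨0, Nat.pos_of_ne_zero (NeZero.ne K)⟩, Finset.mem_univ _⟩

lemma AH.wts_sum_one (t : ℕ) (D : ℝ) : ∑ k, wts ℓ t D k = 1 := by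
  unfold wts
  split
  · rw [Finset.sum_ite_mem, Finset.univ_inter, Finset.sum_const, nsmul_eq_mul]
    have h := AH.leaders_nonempty (cumLoss ℓ t)
    have : ((leaders (cumLoss ℓ t)).card : ℝ) ≠ 0 := by
      simp [Finset.card_ne_zero_of_mem h.choose_spec]
    field_simp
  · rw [← Finset.sum_div]
    exact div_self (ne_of_gt (AH.Z_pos ℓ t _))

lemma AH.vvar_nonneg (t : ℕ) (D : ℝ) : 0 ≤ vvar ℓ t D :=
  Finset.sum_nonneg fun k _ => mul_nonneg (AH.wts_nonneg ℓ t D k) (sq_nonneg _)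

/-- For `D = 0` (FTL) the mixability gap is in `[0, 1]`. -/
lemma AH.mixGap_zero (hℓ : ∀ t k, ℓ t k ∈ Set.Icc (0 : ℝ) 1) (t : ℕ) :
    0 ≤ mixGap ℓ t 0 ∧ mixGap ℓ t 0 ≤ 1 := by
  have hlead := AH.leaders_nonempty (cumLoss ℓ t)
  set s := leaders (cumLoss ℓ t) with hs
  have hcard : (0:ℝ) < (s.card : ℝ) := by
    exact_mod_cast Finset.card_pos.2 hlead
  have hH : hloss ℓ t 0 = ∑ k ∈ s, ((s.card : ℝ))⁻¹ * ℓ t k := by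
    unfold hloss wts
    simp only [if_pos rfl, if_true, ← hs]
    have e : ∀ x : Fin K, (if x ∈ s then ((s.card:ℝ))⁻¹ else 0) * ℓ t x
        = if x ∈ s then ((s.card:ℝ))⁻¹ * ℓ t x else 0 := fun x => by split <;> simp
    simp only [e]
    rw [Finset.sum_ite_mem, Finset.univ_inter]
  -- min of ℓ t over leaders
  obtain ⟨k₀, hk₀s, hk₀⟩ := Finset.exists_min_image s (ℓ t) hlead
  have hk₀h : ℓ t k₀ ≤ hloss ℓ t 0 := by
    rw [hH]
    calc ℓ t k₀ = ∑ k ∈ s, ((s.card : ℝ))⁻¹ * ℓ t k₀ := by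
          rw [Finset.sum_const, nsmul_eq_mul]; field_simp
    _ ≤ _ := Finset.sum_le_sum fun k hk =>
        mul_le_mul_of_nonneg_left (hk₀ k hk) (by positivity)
  have hH1 : hloss ℓ t 0 ≤ 1 := by
    rw [hH]
    calc ∑ k ∈ s, ((s.card : ℝ))⁻¹ * ℓ t k ≤ ∑ k ∈ s, ((s.card : ℝ))⁻¹ * 1 :=
          Finset.sum_le_sum fun k _ =>
            mul_le_mul_of_nonneg_left (hℓ t k).2 (by positivity)
    _ = 1 := by rw [Finset.sum_const, nsmul_eq_mul]; field_simp
  have hbest_mono : bestLoss (cumLoss ℓ t) ≤ bestLoss (cumLoss ℓ (t+1)) := by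
    unfold bestLoss
    apply Finset.le_inf'
    intro k _
    have h1 : cumLoss ℓ (t+1) k = cumLoss ℓ t k + ℓ t k := Finset.sum_range_succ _ _
    have h2 : bestLoss (cumLoss ℓ t) ≤ cumLoss ℓ t k :=
      Finset.inf'_le _ (Finset.mem_univ k)
    unfold bestLoss at h2
    have := (hℓ t k).1
    linarith
  have hbest_step : bestLoss (cumLoss ℓ (t+1)) ≤ bestLoss (cumLoss ℓ t) + ℓ t k₀ := by
    have h1 : cumLoss ℓ t k₀ = bestLoss (cumLoss ℓ t) :=
      (Finset.mem_filter.1 hk₀s).2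
    have h2 : bestLoss (cumLoss ℓ (t+1)) ≤ cumLoss ℓ (t+1) k₀ :=
      Finset.inf'_le _ (Finset.mem_univ k₀)
    have h3 : cumLoss ℓ (t+1) k₀ = cumLoss ℓ t k₀ + ℓ t k₀ := Finset.sum_range_succ _ _
    rw [h3, h1] at h2
    exact h2
  unfold mixGap mloss
  rw [if_pos rfl]
  constructor
  · linarith
  · linarith

/-- For `D ≠ 0` the mixability gap is `(1/η) log S`. -/
lemma AH.mixGap_eq (t : ℕ) (D : ℝ) (hD : D ≠ 0)
    (hη : 0 < Real.log K / D) :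
    mixGap ℓ t D = (1/(Real.log K / D)) *
      Real.log (∑ k, wts ℓ t D k *
        Real.exp ((Real.log K / D) * (hloss ℓ t D - ℓ t k))) := by
  set η := Real.log K / D with hηdef
  set Z := ∑ j : Fin K, Real.exp (-η * cumLoss ℓ t j) with hZ
  set Z' := ∑ j : Fin K, Real.exp (-η * cumLoss ℓ (t+1) j) with hZ'
  have hZpos : 0 < Z := AH.Z_pos ℓ t η
  have hZ'pos : 0 < Z' := AH.Z_pos ℓ (t+1) η
  have hKpos : (0:ℝ) < (K:ℝ) := by
    exact_mod_cast Nat.pos_of_ne_zero (NeZero.ne K)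
  set h := hloss ℓ t D with hhdef
  -- S = e^{ηh} Z'/Z
  have hw : ∀ k, wts ℓ t D k = Real.exp (-η * cumLoss ℓ t k) / Z := by
    intro k; unfold wts; rw [if_neg hD]
  have hsum : (∑ k, wts ℓ t D k * Real.exp (η * (h - ℓ t k)))
      = Real.exp (η * h) * (Z' / Z) := by
    have e1 : ∀ k : Fin K, wts ℓ t D k * Real.exp (η * (h - ℓ t k))
        = Real.exp (η * h) * (Real.exp (-η * cumLoss ℓ (t+1) k) / Z) := by
      intro k
      have hc : cumLoss ℓ (t+1) k = cumLoss ℓ t k + ℓ t k := Finset.sum_range_succ _ _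
      rw [hw k, hc, div_mul_eq_mul_div, ← Real.exp_add, ← mul_div_assoc, ← Real.exp_add,
        show -η * cumLoss ℓ t k + η * (h - ℓ t k) = η * h + -η * (cumLoss ℓ t k + ℓ t k)
          from by ring]
    rw [Finset.sum_congr rfl fun k _ => e1 k, ← Finset.mul_sum, ← Finset.sum_div]
  have hlogS : Real.log (∑ k, wts ℓ t D k * Real.exp (η * (h - ℓ t k)))
      = η * h + (Real.log Z' - Real.log Z) := by
    rw [hsum, Real.log_mul (Real.exp_ne_zero _) (ne_of_gt (div_pos hZ'pos hZpos)),
      Real.log_exp, Real.log_div (ne_of_gt hZ'pos) (ne_of_gt hZpos)]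
  -- mloss
  have hm : mloss ℓ t D = -(1/η) * (Real.log Z' - Real.log Z) := by
    unfold mloss Mconst
    rw [if_neg hD, ← hηdef, ← hZ, ← hZ']
    rw [Real.log_mul (by positivity) (ne_of_gt hZ'pos),
        Real.log_mul (by positivity) (ne_of_gt hZpos)]
    ring
  have hη0 : η ≠ 0 := ne_of_gt hη
  unfold mixGap
  rw [hm, hlogS, ← hhdef]
  field_simp
  ring

/-- Per-round bound for `K ≥ 2`. -/
lemma AH.round (hK : 1 < K) (hℓ : ∀ t k, ℓ t k ∈ Set.Icc (0 : ℝ) 1)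
    (t : ℕ) (D : ℝ) (hD : 0 ≤ D) :
    0 ≤ mixGap ℓ t D ∧ mixGap ℓ t D ≤ 1 ∧
    2 * mixGap ℓ t D * D ≤ (vvar ℓ t D + 2/3 * mixGap ℓ t D) * Real.log K := by
  have hlogK : 0 < Real.log K := Real.log_pos (by exact_mod_cast hK)
  rcases eq_or_lt_of_le hD with hD0 | hDpos
  · obtain ⟨h0, h1⟩ := AH.mixGap_zero ℓ hℓ t
    rw [← hD0]
    refine ⟨h0, h1, ?_⟩
    rw [mul_zero]
    apply mul_nonneg _ (le_of_lt hlogK)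
    have := AH.vvar_nonneg ℓ t 0
    linarith
  · have hη : 0 < Real.log K / D := div_pos hlogK hDpos
    have hD0 : D ≠ 0 := ne_of_gt hDpos
    have heq := AH.mixGap_eq ℓ t D hD0 hη
    have hh : hloss ℓ t D = ∑ j, wts ℓ t D j * ℓ t j := rfl
    rw [hh] at heq
    obtain ⟨c0, c1, c2⟩ := AH.core (wts ℓ t D) (ℓ t) (Real.log K / D) hη
      (AH.wts_nonneg ℓ t D) (AH.wts_sum_one ℓ t D)
      (fun k => (hℓ t k).1) (fun k => (hℓ t k).2)
    have hv : vvar ℓ t D = ∑ k, wts ℓ t D k * (ℓ t k - ∑ j, wts ℓ t D j * ℓ t j)^2 := rfl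
    rw [heq, hv]
    refine ⟨c0, c1, ?_⟩
    set η := Real.log K / D with hηdef
    set δ := (1/η) * Real.log (∑ k, wts ℓ t D k *
      Real.exp (η * ((∑ j, wts ℓ t D j * ℓ t j) - ℓ t k))) with hδdef
    set v := ∑ k, wts ℓ t D k * (ℓ t k - ∑ j, wts ℓ t D j * ℓ t j)^2 with hvdef
    have hmul := mul_le_mul_of_nonneg_right c2 (le_of_lt hDpos)
    have hexp : (3/2 * η * v + η * δ) * D = 3/2 * v * Real.log K + δ * Real.log K := by
      rw [hηdef]; field_simp
    rw [hexp] at hmul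
    nlinarith

lemma AH.K1_mixGap (ℓ : ℕ → Fin 1 → ℝ) (t : ℕ) : mixGap ℓ t 0 = 0 := by
  have hb : ∀ L : Fin 1 → ℝ, bestLoss L = L 0 := fun L => by
    refine le_antisymm (Finset.inf'_le _ (Finset.mem_univ _))
      (Finset.le_inf' _ _ fun k _ => ?_)
    rw [Subsingleton.elim (0 : Fin 1) k]
  have hlead : leaders (cumLoss ℓ t) = Finset.univ := by
    unfold leaders
    apply Finset.filter_true_of_mem
    intro k _
    rw [hb, Subsingleton.elim k 0]
  have hw : wts ℓ t 0 0 = 1 := by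
    unfold wts
    rw [if_pos rfl, hlead, if_pos (Finset.mem_univ _)]
    simp
  have hH : hloss ℓ t 0 = ℓ t 0 := by
    unfold hloss
    rw [Fin.sum_univ_one, hw, one_mul]
  have hc : cumLoss ℓ (t+1) 0 = cumLoss ℓ t 0 + ℓ t 0 := Finset.sum_range_succ _ _
  unfold mixGap mloss
  rw [if_pos rfl, hH, hb, hb, hc]
  ring

end Hedge

/-- AdaHedge quadratic bound: `(Δ_T)² ≤ V_T·ln K + (1 + (2/3)·ln K)·Δ_T`, where
`V_T = ∑_t v_t` is the cumulative loss variance under AdaHedge's weights. -/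
theorem adahedge_delta_square (K : ℕ) [NeZero K] (T : ℕ)
    (ℓ : ℕ → Fin K → ℝ) (hℓ : ∀ t k, ℓ t k ∈ Set.Icc (0 : ℝ) 1) :
    (ahDelta ℓ T)^2 ≤
      (∑ t ∈ Finset.range T, vvar ℓ t (ahDelta ℓ t)) * Real.log K
        + (1 + (2/3) * Real.log K) * ahDelta ℓ T := by
  have hK : K = 1 ∨ 1 < K := by
    have := Nat.pos_of_ne_zero (NeZero.ne K); omega
  rcases hK with hK | hK
  · subst hK
    have hz : ∀ S, ahDelta ℓ S = 0 := by
      intro S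
      induction S with
      | zero => rfl
      | succ t ih => simp only [ahDelta, ih, AH.K1_mixGap, add_zero]
    rw [hz T]
    simp
  · have hpos : ∀ S, 0 ≤ ahDelta ℓ S := by
      intro S
      induction S with
      | zero => exact le_refl 0
      | succ t ih =>
        have := (AH.round ℓ hK hℓ t _ ih).1
        simp only [ahDelta]
        linarith
    induction T with
    | zero => simp [ahDelta]
    | succ t ih =>
      obtain ⟨h0, h1, h2⟩ := AH.round ℓ hK hℓ t _ (hpos t)
      rw [Finset.sum_range_succ]
      simp only [ahDelta]
      have hd2 : (mixGap ℓ t (ahDelta ℓ t))^2 ≤ mixGap ℓ t (ahDelta ℓ t) := by nlinarith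
      nlinarith [ih]


end
end

section
/- (Variance bound via best-expert loss) Suppose losses are in [0,1]^K and AdaHedge's cumulative Hedge loss satisfies H_T ≥ L*_T. Then the cumulative loss variance satisfies V_T ≤ L*_T·(T - L*_T)/T + 2·Δ_T. -/
open Finset

noncomputable section

set_option linter.unusedSectionVars false
namespace AHProof

variable {K : ℕ} [NeZero K] (ℓ : ℕ → Fin K → ℝ)

lemma Kpos : (0:ℝ) < K := by
  exact_mod_cast Nat.pos_of_ne_zero (NeZero.ne K)

instance : Nonempty (Fin K) := ⟨⟨0, Nat.pos_of_ne_zero (NeZero.ne K)⟩⟩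

lemma cumLoss_succ (t : ℕ) (k : Fin K) :
    cumLoss ℓ (t+1) k = cumLoss ℓ t k + ℓ t k := Finset.sum_range_succ _ _

lemma bestLoss_le (L : Fin K → ℝ) (k : Fin K) : bestLoss L ≤ L k :=
  Finset.inf'_le _ (Finset.mem_univ k)

lemma exists_best (L : Fin K → ℝ) : ∃ k, L k = bestLoss L := by
  obtain ⟨k, _, hk⟩ := Finset.exists_mem_eq_inf' (α := ℝ)
    ⟨⟨0, Nat.pos_of_ne_zero (NeZero.ne K)⟩, Finset.mem_univ _⟩ L
  exact ⟨k, hk.symm⟩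

lemma le_bestLoss (L : Fin K → ℝ) (c : ℝ) (h : ∀ k, c ≤ L k) : c ≤ bestLoss L :=
  Finset.le_inf' _ _ fun k _ => h k


lemma cumLoss_nonneg (hℓ : ∀ t k, ℓ t k ∈ Set.Icc (0:ℝ) 1) (t : ℕ) (k : Fin K) : 0 ≤ cumLoss ℓ t k :=
  Finset.sum_nonneg fun s _ => (hℓ s k).1

lemma bestLoss_nonneg (hℓ : ∀ t k, ℓ t k ∈ Set.Icc (0:ℝ) 1) (t : ℕ) : 0 ≤ bestLoss (cumLoss ℓ t) :=
  le_bestLoss _ _ fun k => cumLoss_nonneg ℓ hℓ t k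

lemma bestLoss_zero : bestLoss (cumLoss ℓ 0) = 0 := by
  obtain ⟨k, hk⟩ := exists_best (cumLoss ℓ 0)
  rw [← hk]; simp [cumLoss]

lemma bestLoss_mono (hℓ : ∀ t k, ℓ t k ∈ Set.Icc (0:ℝ) 1) (t : ℕ) :
    bestLoss (cumLoss ℓ t) ≤ bestLoss (cumLoss ℓ (t+1)) := by
  refine le_bestLoss _ _ fun k => ?_
  rw [cumLoss_succ]
  have := (hℓ t k).1
  have := bestLoss_le (cumLoss ℓ t) k
  linarith

lemma leaders_nonempty (t : ℕ) : (leaders (cumLoss ℓ t)).Nonempty := by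
  obtain ⟨k, hk⟩ := exists_best (cumLoss ℓ t)
  exact ⟨k, by simp [leaders, hk]⟩

lemma Z_pos (η : ℝ) (t : ℕ) : 0 < ∑ k, Real.exp (-η * cumLoss ℓ t k) :=
  Finset.sum_pos (fun k _ => Real.exp_pos _) Finset.univ_nonempty

lemma wts_nonneg (t : ℕ) (D : ℝ) (k : Fin K) : 0 ≤ wts ℓ t D k := by
  rw [wts]
  split_ifs with h1 h2
  · positivity
  · exact le_refl 0
  · exact div_nonneg (Real.exp_pos _).le (Z_pos ℓ _ t).le

lemma sum_wts (t : ℕ) (D : ℝ) : ∑ k, wts ℓ t D k = 1 := by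
  by_cases hD : D = 0
  · simp only [wts, hD, if_true]
    rw [Finset.sum_ite_mem, Finset.univ_inter, Finset.sum_const, nsmul_eq_mul,
      mul_inv_cancel₀]
    exact_mod_cast Finset.card_ne_zero.2 (leaders_nonempty ℓ t)
  · simp only [wts, hD, if_false]
    rw [← Finset.sum_div, div_self (Z_pos ℓ _ t).ne']

lemma hloss_nonneg (hℓ : ∀ t k, ℓ t k ∈ Set.Icc (0:ℝ) 1) (t : ℕ) (D : ℝ) : 0 ≤ hloss ℓ t D :=
  Finset.sum_nonneg fun k _ => mul_nonneg (wts_nonneg ℓ t D k) (hℓ t k).1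

lemma hloss_le_one (hℓ : ∀ t k, ℓ t k ∈ Set.Icc (0:ℝ) 1) (t : ℕ) (D : ℝ) : hloss ℓ t D ≤ 1 := by
  rw [hloss]
  calc ∑ k, wts ℓ t D k * ℓ t k ≤ ∑ k, wts ℓ t D k * 1 :=
        Finset.sum_le_sum fun k _ =>
          mul_le_mul_of_nonneg_left (hℓ t k).2 (wts_nonneg ℓ t D k)
    _ = 1 := by simp only [mul_one]; exact sum_wts ℓ t D

lemma vvar_le (hℓ : ∀ t k, ℓ t k ∈ Set.Icc (0:ℝ) 1) (t : ℕ) (D : ℝ) : vvar ℓ t D ≤ hloss ℓ t D - (hloss ℓ t D)^2 := by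
  have e1 : vvar ℓ t D = (∑ k, wts ℓ t D k * (ℓ t k)^2)
      - 2 * hloss ℓ t D * (∑ k, wts ℓ t D k * ℓ t k)
      + (hloss ℓ t D)^2 * (∑ k, wts ℓ t D k) := by
    rw [vvar, Finset.mul_sum, Finset.mul_sum, ← Finset.sum_sub_distrib,
      ← Finset.sum_add_distrib]
    exact Finset.sum_congr rfl fun k _ => by ring
  have e2 : (∑ k, wts ℓ t D k * (ℓ t k)^2) ≤ hloss ℓ t D := by
    rw [hloss]
    refine Finset.sum_le_sum fun k _ => ?_
    have h1 := (hℓ t k).1; have h2 := (hℓ t k).2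
    have := wts_nonneg ℓ t D k
    nlinarith [mul_nonneg this (mul_nonneg h1 (by linarith : (0:ℝ) ≤ 1 - ℓ t k))]
  rw [e1, sum_wts, ← hloss]
  nlinarith [e2]


lemma Mconst_zero (η : ℝ) : Mconst ℓ η 0 = 0 := by
  have h0 : ∀ k : Fin K, cumLoss ℓ 0 k = 0 := fun k => by simp [cumLoss]
  have : ((1:ℝ) / K) * ∑ k : Fin K, Real.exp (-η * cumLoss ℓ 0 k) = 1 := by
    field_simp [h0, Finset.card_univ]
    simp [h0, (Kpos (K := K)).ne']
  rw [Mconst, this, Real.log_one, mul_zero]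

lemma argZ_pos (η : ℝ) (t : ℕ) :
    0 < ((1:ℝ) / K) * ∑ k, Real.exp (-η * cumLoss ℓ t k) :=
  mul_pos (one_div_pos.2 Kpos) (Z_pos ℓ η t)

lemma Mconst_le_best_add {η : ℝ} (hη : 0 < η) (t : ℕ) :
    Mconst ℓ η t ≤ bestLoss (cumLoss ℓ t) + Real.log K / η := by
  have hK : (0:ℝ) < K := Kpos
  obtain ⟨k0, hk0⟩ := exists_best (cumLoss ℓ t)
  set B := bestLoss (cumLoss ℓ t) with hB
  set L := Real.log ((1:ℝ)/K * ∑ k, Real.exp (-η * cumLoss ℓ t k)) with hL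
  have h2 : -Real.log K + -η * B ≤ L := by
    have h1 : Real.exp (-η * B) ≤ ∑ k, Real.exp (-η * cumLoss ℓ t k) := by
      have h := Finset.single_le_sum (f := fun k => Real.exp (-η * cumLoss ℓ t k))
        (fun k _ => (Real.exp_pos _).le) (Finset.mem_univ k0)
      simpa [hk0] using h
    have h3 := Real.log_le_log (mul_pos (one_div_pos.2 hK) (Real.exp_pos (-η * B)))
      (mul_le_mul_of_nonneg_left h1 (one_div_pos.2 hK).le)
    rwa [Real.log_mul (one_div_pos.2 hK).ne' (Real.exp_pos _).ne', Real.log_exp,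
      ← hL, one_div, Real.log_inv] at h3
  have h3 : Mconst ℓ η t = (-L) / η := by rw [Mconst, ← hL]; ring
  rw [h3]
  calc (-L)/η ≤ (Real.log K + η * B)/η := (div_le_div_iff_of_pos_right hη).2 (by linarith)
    _ = B + Real.log K / η := by field_simp; ring

lemma best_le_Mconst {η : ℝ} (hη : 0 < η) (t : ℕ) :
    bestLoss (cumLoss ℓ t) ≤ Mconst ℓ η t := by
  have hK : (0:ℝ) < K := Kpos
  set B := bestLoss (cumLoss ℓ t) with hB
  set L := Real.log ((1:ℝ)/K * ∑ k, Real.exp (-η * cumLoss ℓ t k)) with hL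
  have h1 : (∑ k, Real.exp (-η * cumLoss ℓ t k)) ≤ K * Real.exp (-η * B) := by
    calc (∑ k, Real.exp (-η * cumLoss ℓ t k)) ≤ ∑ _k : Fin K, Real.exp (-η * B) :=
          Finset.sum_le_sum fun k _ => Real.exp_le_exp.2 (by
            have := bestLoss_le (cumLoss ℓ t) k
            nlinarith)
      _ = K * Real.exp (-η * B) := by
          rw [Finset.sum_const, Finset.card_univ, Fintype.card_fin, nsmul_eq_mul]
  have h2 : L ≤ -η * B := by
    have hstep : (1:ℝ)/K * ∑ k, Real.exp (-η * cumLoss ℓ t k) ≤ Real.exp (-η*B) := by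
      calc (1:ℝ)/K * ∑ k, Real.exp (-η * cumLoss ℓ t k)
          ≤ (1:ℝ)/K * ((K:ℝ) * Real.exp (-η * B)) :=
            mul_le_mul_of_nonneg_left h1 (by positivity)
        _ = Real.exp (-η * B) := by field_simp
    calc L ≤ Real.log (Real.exp (-η*B)) :=
          Real.log_le_log (argZ_pos ℓ η t) hstep
      _ = -η*B := Real.log_exp _
  have h3 : Mconst ℓ η t = (-L) / η := by rw [Mconst, ← hL]; ring
  rw [h3, le_div_iff₀ hη]
  nlinarith [h2]

lemma Mconst_anti {a b : ℝ} (ha : 0 < a) (hab : a ≤ b) (t : ℕ) :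
    Mconst ℓ b t ≤ Mconst ℓ a t := by
  have hb : 0 < b := ha.trans_le hab
  have hK : (0:ℝ) < K := Kpos
  set r := b / a with hr
  have hr1 : 1 ≤ r := (one_le_div ha).2 hab
  set A := (1:ℝ)/K * ∑ k, Real.exp (-a * cumLoss ℓ t k) with hA
  set Bz := (1:ℝ)/K * ∑ k, Real.exp (-b * cumLoss ℓ t k) with hBz
  have hApos : 0 < A := argZ_pos ℓ a t
  have hBpos : 0 < Bz := argZ_pos ℓ b t
  have key : A ^ r ≤ Bz := by
    have hmain := Real.rpow_arith_mean_le_arith_mean_rpow Finset.univ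
      (fun _ : Fin K => (1:ℝ)/K) (fun k => Real.exp (-a * cumLoss ℓ t k))
      (fun k _ => by positivity)
      (by rw [Finset.sum_const, Finset.card_univ, Fintype.card_fin, nsmul_eq_mul]
          field_simp)
      (fun k _ => (Real.exp_pos _).le) hr1
    rw [← Finset.mul_sum] at hmain
    have heq : ∀ k : Fin K, Real.exp (-a * cumLoss ℓ t k) ^ r
        = Real.exp (-b * cumLoss ℓ t k) := by
      intro k
      rw [← Real.exp_mul]
      congr 1
      have har : a * r = b := by rw [hr]; field_simp
      rw [show -a * cumLoss ℓ t k * r = -(a*r) * cumLoss ℓ t k from by ring, har]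
    calc A ^ r ≤ ∑ k, (1:ℝ)/K * Real.exp (-a * cumLoss ℓ t k) ^ r := hmain
      _ = Bz := by rw [hBz, Finset.mul_sum]; exact Finset.sum_congr rfl fun k _ => by rw [heq]
  have hlog : r * Real.log A ≤ Real.log Bz := by
    have := Real.log_le_log (Real.rpow_pos_of_pos hApos r) key
    rwa [Real.log_rpow hApos] at this
  have e1 : Mconst ℓ b t = (-Real.log Bz) / b := by rw [Mconst, ← hBz]; ring
  have e2 : Mconst ℓ a t = (-Real.log A) / a := by rw [Mconst, ← hA]; ring
  rw [e1, e2]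
  calc (-Real.log Bz)/b ≤ (-(r * Real.log A))/b := (div_le_div_iff_of_pos_right hb).2 (by linarith)
    _ = (-Real.log A)/a := by rw [hr]; field_simp


lemma mloss_le_hloss (hℓ : ∀ t k, ℓ t k ∈ Set.Icc (0:ℝ) 1) (t : ℕ) {D : ℝ}
    (hD : 0 ≤ D) : mloss ℓ t D ≤ hloss ℓ t D := by
  by_cases h0 : D = 0
  · rw [mloss, if_pos h0, h0]
    set c := ((leaders (cumLoss ℓ t)).card : ℝ) with hc
    have hcpos : 0 < c := by
      rw [hc]; exact_mod_cast Finset.card_pos.2 (leaders_nonempty ℓ t)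
    have hh : hloss ℓ t 0 = ∑ k ∈ leaders (cumLoss ℓ t), c⁻¹ * ℓ t k := by
      rw [hloss]
      simp only [wts, if_pos rfl, if_true, eq_self_iff_true, ite_mul, zero_mul, ← hc]
      rw [Finset.sum_ite_mem, Finset.univ_inter]
    rw [hh]
    have hbound : ∀ k ∈ leaders (cumLoss ℓ t),
        c⁻¹ * (bestLoss (cumLoss ℓ (t+1)) - bestLoss (cumLoss ℓ t)) ≤ c⁻¹ * ℓ t k := by
      intro k hk
      have hk' : cumLoss ℓ t k = bestLoss (cumLoss ℓ t) := by
        simpa [leaders] using hk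
      have h1 : bestLoss (cumLoss ℓ (t+1)) ≤ cumLoss ℓ (t+1) k := bestLoss_le _ k
      rw [cumLoss_succ, hk'] at h1
      exact mul_le_mul_of_nonneg_left (by linarith) (inv_nonneg.2 hcpos.le)
    calc bestLoss (cumLoss ℓ (t+1)) - bestLoss (cumLoss ℓ t)
        = ∑ _k ∈ leaders (cumLoss ℓ t),
            c⁻¹ * (bestLoss (cumLoss ℓ (t+1)) - bestLoss (cumLoss ℓ t)) := by
          rw [Finset.sum_const, nsmul_eq_mul, ← hc, ← mul_assoc,
            mul_inv_cancel₀ hcpos.ne', one_mul]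
      _ ≤ ∑ k ∈ leaders (cumLoss ℓ t), c⁻¹ * ℓ t k := Finset.sum_le_sum hbound
  · rw [mloss, if_neg h0]
    have hDpos : 0 < D := lt_of_le_of_ne hD (Ne.symm h0)
    by_cases hK1 : K = 1
    · have hz : Real.log K / D = 0 := by rw [hK1]; simp
      rw [hz]
      have hM : ∀ s, Mconst ℓ (0:ℝ) s = 0 := fun s => by simp [Mconst]
      rw [hM, hM]
      simpa using hloss_nonneg ℓ hℓ t D
    · have hKne : K ≠ 0 := NeZero.ne K
      have hK2 : (1:ℝ) < K := by
        have : 1 < K := by omega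
        exact_mod_cast this
      have hlogK : 0 < Real.log K := Real.log_pos hK2
      set η := Real.log K / D with hη
      have hηpos : 0 < η := div_pos hlogK hDpos
      set Zt := ∑ k, Real.exp (-η * cumLoss ℓ t k) with hZt
      set Zt1 := ∑ k, Real.exp (-η * cumLoss ℓ (t+1) k) with hZt1
      have hZtpos : 0 < Zt := Z_pos ℓ η t
      have hZt1pos : 0 < Zt1 := Z_pos ℓ η (t+1)
      have hjensen : Real.exp (-η * hloss ℓ t D) * Zt ≤ Zt1 := by
        have hw : ∀ k, wts ℓ t D k = Real.exp (-η * cumLoss ℓ t k) / Zt := by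
          intro k; rw [wts, if_neg h0]
        have hJ := convexOn_exp.map_sum_le (t := Finset.univ)
          (w := fun k => wts ℓ t D k) (p := fun k => -η * ℓ t k)
          (fun k _ => wts_nonneg ℓ t D k) (sum_wts ℓ t D)
          (fun k _ => Set.mem_univ _)
        simp only [smul_eq_mul, Function.comp] at hJ
        have hsum : ∑ k, wts ℓ t D k * (-η * ℓ t k) = -η * hloss ℓ t D := by
          rw [hloss, Finset.mul_sum]; exact Finset.sum_congr rfl fun k _ => by ring
        rw [hsum] at hJ
        have hratio : ∑ k, wts ℓ t D k * Real.exp (-η * ℓ t k) = Zt1 / Zt := by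
          rw [hZt1, Finset.sum_div]
          refine Finset.sum_congr rfl fun k _ => ?_
          rw [hw k, cumLoss_succ, show -η * (cumLoss ℓ t k + ℓ t k)
            = -η * cumLoss ℓ t k + -η * ℓ t k from by ring, Real.exp_add]
          ring
        rw [hratio] at hJ
        calc Real.exp (-η * hloss ℓ t D) * Zt ≤ (Zt1/Zt) * Zt :=
              mul_le_mul_of_nonneg_right hJ hZtpos.le
          _ = Zt1 := by field_simp
      have hlog : -η * hloss ℓ t D + Real.log Zt ≤ Real.log Zt1 := by
        have h5 := Real.log_le_log (mul_pos (Real.exp_pos _) hZtpos) hjensen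
        rwa [Real.log_mul (Real.exp_pos _).ne' hZtpos.ne', Real.log_exp] at h5
      have hK : (0:ℝ) < K := Kpos
      have e1 : Mconst ℓ η (t+1) - Mconst ℓ η t
          = -(1/η) * (Real.log Zt1 - Real.log Zt) := by
        rw [Mconst, Mconst, ← hZt, ← hZt1,
          Real.log_mul (one_div_pos.2 hK).ne' hZt1pos.ne',
          Real.log_mul (one_div_pos.2 hK).ne' hZtpos.ne']
        ring
      rw [e1]
      have h2 : -η * hloss ℓ t D ≤ Real.log Zt1 - Real.log Zt := by linarith
      have h3 : -(1/η) * (Real.log Zt1 - Real.log Zt)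
          ≤ -(1/η) * (-η * hloss ℓ t D) :=
        mul_le_mul_of_nonpos_left h2 (neg_nonpos.2 (one_div_pos.2 hηpos).le)
      have h4 : -(1/η) * (-η * hloss ℓ t D) = hloss ℓ t D := by field_simp
      linarith

lemma mixGap_nonneg (hℓ : ∀ t k, ℓ t k ∈ Set.Icc (0:ℝ) 1) (t : ℕ) {D : ℝ}
    (hD : 0 ≤ D) : 0 ≤ mixGap ℓ t D := by
  rw [mixGap, sub_nonneg]; exact mloss_le_hloss ℓ hℓ t hD

lemma ahDelta_nonneg (hℓ : ∀ t k, ℓ t k ∈ Set.Icc (0:ℝ) 1) :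
    ∀ t, 0 ≤ ahDelta ℓ t
  | 0 => le_refl 0
  | (t+1) => by
    have ih := ahDelta_nonneg hℓ t
    have h := mixGap_nonneg ℓ hℓ t ih
    rw [ahDelta]
    linarith

lemma ahDelta_mono (hℓ : ∀ t k, ℓ t k ∈ Set.Icc (0:ℝ) 1) (t : ℕ) :
    ahDelta ℓ t ≤ ahDelta ℓ (t+1) := by
  rw [ahDelta]
  linarith [mixGap_nonneg ℓ hℓ t (ahDelta_nonneg ℓ hℓ t)]

lemma ahDelta_eq_sum (t : ℕ) :
    ahDelta ℓ t = ∑ s ∈ Finset.range t, mixGap ℓ s (ahDelta ℓ s) := by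
  induction t with
  | zero => simp [ahDelta]
  | succ t ih => rw [Finset.sum_range_succ, ← ih, ahDelta]


lemma msum_le (hℓ : ∀ t k, ℓ t k ∈ Set.Icc (0:ℝ) 1) (T : ℕ) :
    ∑ t ∈ Finset.range T, mloss ℓ t (ahDelta ℓ t)
      ≤ bestLoss (cumLoss ℓ T) + ahDelta ℓ T := by
  by_cases hK1 : K = 1
  · have hstep : ∀ t, mloss ℓ t (ahDelta ℓ t)
        ≤ bestLoss (cumLoss ℓ (t+1)) - bestLoss (cumLoss ℓ t) := by
      intro t
      rw [mloss]
      split_ifs with h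
      · exact le_refl _
      · have hz : Real.log K / ahDelta ℓ t = 0 := by simp [hK1]
        rw [hz]
        have hM : ∀ s, Mconst ℓ (0:ℝ) s = 0 := fun s => by simp [Mconst]
        rw [hM, hM]
        have := bestLoss_mono ℓ hℓ t
        linarith
    calc ∑ t ∈ Finset.range T, mloss ℓ t (ahDelta ℓ t)
        ≤ ∑ t ∈ Finset.range T,
            (bestLoss (cumLoss ℓ (t+1)) - bestLoss (cumLoss ℓ t)) :=
          Finset.sum_le_sum fun t _ => hstep t
      _ = bestLoss (cumLoss ℓ T) - bestLoss (cumLoss ℓ 0) :=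
          Finset.sum_range_sub (fun t => bestLoss (cumLoss ℓ t)) T
      _ ≤ bestLoss (cumLoss ℓ T) + ahDelta ℓ T := by
          rw [bestLoss_zero]; linarith [ahDelta_nonneg ℓ hℓ T]
  · have hKne : K ≠ 0 := NeZero.ne K
    have hK2 : (1:ℝ) < K := by
      have : 1 < K := by omega
      exact_mod_cast this
    have hlogK : 0 < Real.log K := Real.log_pos hK2
    have claim : ∀ S, ∑ t ∈ Finset.range S, mloss ℓ t (ahDelta ℓ t)
        ≤ if ahDelta ℓ S = 0 then bestLoss (cumLoss ℓ S)
          else Mconst ℓ (Real.log K / ahDelta ℓ S) S := by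
      intro S
      induction S with
      | zero =>
        rw [show ahDelta ℓ 0 = 0 from rfl, if_pos rfl, bestLoss_zero ℓ,
          Finset.range_zero, Finset.sum_empty]
      | succ S ih =>
        rw [Finset.sum_range_succ]
        have hDT := ahDelta_nonneg ℓ hℓ S
        have hmono := ahDelta_mono ℓ hℓ S
        by_cases h0 : ahDelta ℓ S = 0
        · rw [h0, if_pos rfl] at ih
          have hm : mloss ℓ S (ahDelta ℓ S)
              = bestLoss (cumLoss ℓ (S+1)) - bestLoss (cumLoss ℓ S) := by
            rw [h0, mloss, if_pos rfl]
          rw [hm]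
          split_ifs with h1
          · linarith
          · have hpos : 0 < ahDelta ℓ (S+1) :=
              lt_of_le_of_ne (h0 ▸ hmono) (Ne.symm h1)
            have := best_le_Mconst ℓ (div_pos hlogK hpos) (S+1)
            linarith
        · have hpos : 0 < ahDelta ℓ S := lt_of_le_of_ne hDT (Ne.symm h0)
          rw [if_neg h0] at ih
          have hm : mloss ℓ S (ahDelta ℓ S)
              = Mconst ℓ (Real.log K / ahDelta ℓ S) (S+1)
                - Mconst ℓ (Real.log K / ahDelta ℓ S) S := by
            rw [mloss, if_neg h0]
          have hpos1 : 0 < ahDelta ℓ (S+1) := lt_of_lt_of_le hpos hmono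
          rw [if_neg hpos1.ne']
          have hanti : Mconst ℓ (Real.log K / ahDelta ℓ S) (S+1)
              ≤ Mconst ℓ (Real.log K / ahDelta ℓ (S+1)) (S+1) := by
            apply Mconst_anti ℓ (div_pos hlogK hpos1)
            gcongr
          linarith
    have hc := claim T
    split_ifs at hc with h
    · linarith [ahDelta_nonneg ℓ hℓ T]
    · have hpos : 0 < ahDelta ℓ T :=
        lt_of_le_of_ne (ahDelta_nonneg ℓ hℓ T) (Ne.symm h)
      have hub := Mconst_le_best_add ℓ (div_pos hlogK hpos) T
      have heq : Real.log K / (Real.log K / ahDelta ℓ T) = ahDelta ℓ T := by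
        rw [div_div_eq_mul_div, mul_comm, mul_div_assoc, div_self hlogK.ne', mul_one]
      rw [heq] at hub
      linarith

lemma hsum_le (hℓ : ∀ t k, ℓ t k ∈ Set.Icc (0:ℝ) 1) (T : ℕ) :
    ∑ t ∈ Finset.range T, hloss ℓ t (ahDelta ℓ t)
      ≤ bestLoss (cumLoss ℓ T) + 2 * ahDelta ℓ T := by
  have h1 : ∑ t ∈ Finset.range T, hloss ℓ t (ahDelta ℓ t)
      = (∑ t ∈ Finset.range T, mloss ℓ t (ahDelta ℓ t)) + ahDelta ℓ T := by
    rw [ahDelta_eq_sum, ← Finset.sum_add_distrib]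
    exact Finset.sum_congr rfl fun t _ => by rw [mixGap]; ring
  rw [h1]
  linarith [msum_le ℓ hℓ T]

end AHProof

open AHProof

/-- Variance bound via the best-expert loss: if `H_T ≥ L*_T`, then
`V_T ≤ L*_T·(T - L*_T)/T + 2·Δ_T`. -/
theorem adahedge_variance_bound (K : ℕ) [NeZero K] (T : ℕ) (hT : 1 ≤ T)
    (ℓ : ℕ → Fin K → ℝ) (hℓ : ∀ t k, ℓ t k ∈ Set.Icc (0 : ℝ) 1)
    (hH : bestLoss (cumLoss ℓ T) ≤ ∑ t ∈ Finset.range T, hloss ℓ t (ahDelta ℓ t)) :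
    (∑ t ∈ Finset.range T, vvar ℓ t (ahDelta ℓ t)) ≤
      bestLoss (cumLoss ℓ T) * ((T : ℝ) - bestLoss (cumLoss ℓ T)) / (T : ℝ)
        + 2 * ahDelta ℓ T := by
  set B := bestLoss (cumLoss ℓ T) with hB
  set H := ∑ t ∈ Finset.range T, hloss ℓ t (ahDelta ℓ t) with hHdef
  set Δ := ahDelta ℓ T with hΔ
  have hTpos : (0:ℝ) < T := by exact_mod_cast hT
  have hV1 : (∑ t ∈ Finset.range T, vvar ℓ t (ahDelta ℓ t))
      ≤ H - ∑ t ∈ Finset.range T, (hloss ℓ t (ahDelta ℓ t))^2 := by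
    rw [hHdef, ← Finset.sum_sub_distrib]
    exact Finset.sum_le_sum fun t _ => vvar_le ℓ hℓ t _
  have hCS : H^2 ≤ (T:ℝ) * ∑ t ∈ Finset.range T, (hloss ℓ t (ahDelta ℓ t))^2 := by
    have h := sq_sum_le_card_mul_sum_sq (s := Finset.range T)
      (f := fun t => hloss ℓ t (ahDelta ℓ t))
    rw [Finset.card_range] at h
    exact_mod_cast h
  have hH2 : H ≤ B + 2*Δ := hsum_le ℓ hℓ T
  have hΔ0 : 0 ≤ Δ := ahDelta_nonneg ℓ hℓ T
  have hB0 : 0 ≤ B := bestLoss_nonneg ℓ hℓ T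
  have hS : H^2/(T:ℝ) ≤ ∑ t ∈ Finset.range T, (hloss ℓ t (ahDelta ℓ t))^2 :=
    (div_le_iff₀ hTpos).2 (by linarith [hCS])
  have key : H - H^2/(T:ℝ) ≤ B * ((T:ℝ) - B)/(T:ℝ) + 2*Δ := by
    have hmul : (H - H^2/(T:ℝ)) * (T:ℝ) ≤ (B * ((T:ℝ) - B)/(T:ℝ) + 2*Δ) * (T:ℝ) := by
      have e1 : (H - H^2/(T:ℝ)) * (T:ℝ) = H*(T:ℝ) - H^2 := by
        field_simp
      have e2 : (B * ((T:ℝ) - B)/(T:ℝ) + 2*Δ) * (T:ℝ)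
          = B*((T:ℝ)-B) + 2*Δ*(T:ℝ) := by
        field_simp
      rw [e1, e2]
      nlinarith [mul_le_mul_of_nonneg_right (show H - B ≤ 2*Δ by linarith) hTpos.le,
        mul_nonneg (sub_nonneg.2 hH) (by linarith : (0:ℝ) ≤ H + B)]
    exact le_of_mul_le_mul_right hmul hTpos
  linarith

end
end
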